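/- arXiv:0712.2688 — 8 statements merged into one kernel-verified Lean document; each statement's English description precedes it below -/
import Mathlib

section
/- Let G be a finite simple graph on n vertices with at least one edge, and let t be the vertex cover number of G. Then cub(G) ≤ t + ⌈log₂(n − t)⌉ − 1. -/
/-- A `k`-cube representation of `G`: an assignment of unit cubes (given by their
lower corners) to vertices so that distinct vertices are adjacent iff all their
coordinate unit intervals intersect. -/
def HasCubeRep {V : Type*} (G : SimpleGraph V) (k : ℕ) : Prop :=
  ∃ c : V → Fin k → ℝ,
    ∀ u v : V, u ≠ v → (G.Adj u v ↔ ∀ i : Fin k, |c u i - c v i| ≤ 1)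

/-- The cubicity of `G`: the least `k` such that `G` has a `k`-cube representation. -/
noncomputable def cubicity {V : Type*} (G : SimpleGraph V) : ℕ :=
  sInf {k : ℕ | HasCubeRep G k}

/-- `Q` is a vertex cover of `G`. -/
def IsVertexCover {V : Type*} (G : SimpleGraph V) (Q : Finset V) : Prop :=
  ∀ ⦃u v : V⦄, G.Adj u v → u ∈ Q ∨ v ∈ Q

/-- The vertex cover number of `G`. -/
noncomputable def vertexCoverNumber {V : Type*} [Fintype V] (G : SimpleGraph V) : ℕ :=
  sInf {t : ℕ | ∃ Q : Finset V, IsVertexCover G Q ∧ Q.card = t}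

/-!
Take a minimum vertex cover `Q`; by minimality every `q ∈ Q` has a neighbour outside `Q`.
Fix `q₀ ∈ Q` and such a neighbour `u₀ ∉ Q`. Each `q ∈ Q \ {q₀}` gets a coordinate placing `q`
at `0`, its neighbours at `1` and all other vertices at `2`, which separates `q` from its
non-neighbours. The independent set `V \ Q` is encoded injectively by `⌈log₂ (n - t)⌉` bits,
with `u₀` coded `0`. In the coordinate of bit `j`, `q₀` sits at `3/4`, the rest of `Q` at `1`,
and a vertex outside `Q` at `0` if its bit is `0`, else at `3/2` or `2` according as it is
adjacent to `q₀` or not. Distinct codes separate vertices outside `Q`, and a non-neighbour of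
`q₀` outside `Q` is not `u₀`, so it has a nonzero bit, which separates it from `q₀`.
-/

section

variable {V : Type*} (G : SimpleGraph V)

theorem hasCubeRep_of_forall_adj_iff {ι : Type*} [Fintype ι] (f : ι → V → ℝ)
    (hf : ∀ u v, u ≠ v → (G.Adj u v ↔ ∀ i, |f i u - f i v| ≤ 1)) :
    HasCubeRep G (Fintype.card ι) := by
  let e := Fintype.equivFin ι
  refine ⟨fun v i => f (e.symm i) v, fun u v huv => (hf u v huv).trans ?_⟩
  exact ⟨fun h i => h _, fun h i => by simpa using h (e i)⟩

theorem cubicity_le_of_hasCubeRep {k : ℕ} (h : HasCubeRep G k) : cubicity G ≤ k :=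
  Nat.sInf_le h

section VertexCover

variable {G} {Q : Finset V} {q : V}

theorem IsVertexCover.erase [DecidableEq V] (hQ : IsVertexCover G Q)
    (hq : ∀ u, G.Adj q u → u ∈ Q) : IsVertexCover G (Q.erase q) := by
  intro u v huv
  simp only [Finset.mem_erase]
  rcases hQ huv with hu | hv
  · by_cases huq : u = q
    · subst huq
      exact Or.inr ⟨huv.ne.symm, hq v huv⟩
    · exact Or.inl ⟨huq, hu⟩
  · by_cases hvq : v = q
    · subst hvq
      exact Or.inl ⟨huv.ne, hq u huv.symm⟩
    · exact Or.inr ⟨hvq, hv⟩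

variable [Fintype V]

theorem vertexCoverNumber_le_card (hQ : IsVertexCover G Q) : vertexCoverNumber G ≤ Q.card :=
  Nat.sInf_le ⟨Q, hQ, rfl⟩

variable (G) in
theorem exists_isVertexCover_card_eq_vertexCoverNumber :
    ∃ Q : Finset V, IsVertexCover G Q ∧ Q.card = vertexCoverNumber G :=
  Nat.sInf_mem (s := {t | ∃ Q : Finset V, IsVertexCover G Q ∧ Q.card = t})
    ⟨_, Finset.univ, fun u _ _ => Or.inl (Finset.mem_univ u), rfl⟩

theorem IsVertexCover.exists_adj_notMem (hQ : IsVertexCover G Q)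
    (hmin : Q.card = vertexCoverNumber G) (hq : q ∈ Q) : ∃ u ∉ Q, G.Adj q u := by
  classical
  by_contra! h
  have := vertexCoverNumber_le_card (hQ.erase fun u hu => not_not.1 fun hu' => h u hu' hu)
  rw [Finset.card_erase_of_mem hq, ← hmin] at this
  have := Finset.card_pos.2 ⟨q, hq⟩
  omega

end VertexCover

section Coordinates

variable [DecidableEq V] [DecidableRel G.Adj]

noncomputable def starCoord (q v : V) : ℝ :=
  if v = q then 0 else if G.Adj q v then 1 else 2

theorem abs_starCoord_sub_le_one {u v : V} (q : V) (h : G.Adj u v) :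
    |starCoord G q u - starCoord G q v| ≤ 1 := by
  have := h.ne
  have := h.symm
  unfold starCoord
  split_ifs <;> subst_vars <;> simp_all <;> norm_num [abs_le]

theorem one_lt_abs_starCoord_sub {q v : V} (hv : v ≠ q) (h : ¬G.Adj q v) :
    1 < |starCoord G q q - starCoord G q v| := by
  simp [starCoord, hv, h]

noncomputable def bitCoord (Q : Finset V) (q₀ : V) (b : V → Bool) (v : V) : ℝ :=
  if v = q₀ then 3 / 4
  else if v ∈ Q then 1
  else if b v then (if G.Adj q₀ v then 3 / 2 else 2)
  else 0

variable {G} {Q : Finset V} {q₀ : V}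

theorem abs_bitCoord_sub_le_one (hQ : IsVertexCover G Q) (b : V → Bool) {u v : V}
    (h : G.Adj u v) : |bitCoord G Q q₀ b u - bitCoord G Q q₀ b v| ≤ 1 := by
  have := h.ne
  have := h.symm
  have := hQ h
  unfold bitCoord
  split_ifs <;> subst_vars <;> simp_all <;> norm_num [abs_le]

theorem one_lt_abs_bitCoord_sub_of_not_adj (hq₀ : q₀ ∈ Q) {b : V → Bool} {v : V}
    (hv : v ∉ Q) (h : ¬G.Adj q₀ v) (hb : b v = true) :
    1 < |bitCoord G Q q₀ b q₀ - bitCoord G Q q₀ b v| := by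
  have : v ≠ q₀ := by rintro rfl; exact hv hq₀
  simp [bitCoord, *]
  norm_num [abs_lt]

theorem one_lt_abs_bitCoord_sub_of_ne (hq₀ : q₀ ∈ Q) {b : V → Bool} {u v : V}
    (hu : u ∉ Q) (hv : v ∉ Q) (hb : b u ≠ b v) :
    1 < |bitCoord G Q q₀ b u - bitCoord G Q q₀ b v| := by
  have : u ≠ q₀ := by rintro rfl; exact hu hq₀
  have : v ≠ q₀ := by rintro rfl; exact hv hq₀
  unfold bitCoord
  cases hbu : b u <;> cases hbv : b v <;> simp_all <;> split_ifs <;> norm_num [abs_lt]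

theorem hasCubeRep_of_isVertexCover (hQ : IsVertexCover G Q) (hq₀ : q₀ ∈ Q) {L : ℕ}
    (code : V → Fin L → Bool) (hinj : Set.InjOn code (↑Q)ᶜ)
    (hzero : ∀ v ∉ Q, code v = (fun _ => false) → G.Adj q₀ v) :
    HasCubeRep G ((Q.erase q₀).card + L) := by
  let f : (Q.erase q₀) ⊕ Fin L → V → ℝ :=
    Sum.elim (fun q => starCoord G q) (fun j => bitCoord G Q q₀ (code · j))
  have hsep_of_mem : ∀ {u v}, u ∈ Q → u ≠ v → ¬G.Adj u v →
      ∃ i, 1 < |f i u - f i v| := by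
    intro u v hu huv hadj
    by_cases hu₀ : u = q₀
    · subst u
      by_cases hv : v ∈ Q
      · refine ⟨.inl ⟨v, Finset.mem_erase.2 ⟨huv.symm, hv⟩⟩, ?_⟩
        rw [abs_sub_comm]
        exact one_lt_abs_starCoord_sub G huv fun h => hadj h.symm
      obtain ⟨j, hj⟩ := Function.ne_iff.1 fun h => hadj (hzero v hv h)
      exact ⟨.inr j, one_lt_abs_bitCoord_sub_of_not_adj hq₀ (b := (code · j)) hv hadj
        (by simpa using hj)⟩
    · exact ⟨.inl ⟨u, Finset.mem_erase.2 ⟨hu₀, hu⟩⟩,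
        one_lt_abs_starCoord_sub G huv.symm hadj⟩
  have hcard : Fintype.card ((Q.erase q₀) ⊕ Fin L) = (Q.erase q₀).card + L := by simp
  refine hcard ▸ hasCubeRep_of_forall_adj_iff G f fun u v huv => ⟨?_, ?_⟩
  · rintro hadj (q | j)
    · exact abs_starCoord_sub_le_one G q hadj
    · exact abs_bitCoord_sub_le_one hQ (code · j) hadj
  · intro hclose
    by_contra hadj
    obtain ⟨i, hi⟩ : ∃ i, 1 < |f i u - f i v| := by
      by_cases hu : u ∈ Q
      · exact hsep_of_mem hu huv hadj
      by_cases hv : v ∈ Q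
      · simpa only [abs_sub_comm] using hsep_of_mem hv huv.symm fun h => hadj h.symm
      obtain ⟨j, hj⟩ := Function.ne_iff.1 fun h => huv (hinj hu hv h)
      exact ⟨.inr j, one_lt_abs_bitCoord_sub_of_ne hq₀ (b := (code · j)) hu hv hj⟩
    exact (hclose i).not_gt hi

end Coordinates

end

theorem exists_injOn_eq_false {α : Type*} {s : Finset α} {a : α} (ha : a ∈ s) {L : ℕ}
    (hs : s.card ≤ 2 ^ L) :
    ∃ code : α → Fin L → Bool, Set.InjOn code s ∧ code a = fun _ => false := by
  classical
  obtain ⟨e⟩ :=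
    Function.Embedding.nonempty_of_card_le (α := s) (β := Fin L → Bool) (by simpa)
  let g := (Equiv.swap (e ⟨a, ha⟩) fun _ => false) ∘ e
  have hg : g.Injective := (Equiv.injective _).comp e.injective
  refine ⟨fun v => if hv : v ∈ s then g ⟨v, hv⟩ else fun _ => false,
    fun u hu v hv huv => ?_, ?_⟩
  · have hu : u ∈ s := hu
    have hv : v ∈ s := hv
    simp only [dif_pos hu, dif_pos hv] at huv
    exact congrArg Subtype.val (hg huv)
  · simp [dif_pos ha, g]

/-- Cubicity is at most `t + ⌈log₂ (n - t)⌉ - 1` where `t` is the vertex cover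
number and `n` the number of vertices, for any graph with at least one edge. -/
theorem cubicity_le_vertexCover {V : Type*} [Fintype V] (G : SimpleGraph V)
    (hE : G.edgeSet.Nonempty) (n t : ℕ)
    (hn : n = Fintype.card V) (ht : t = vertexCoverNumber G) :
    cubicity G ≤ t + Nat.clog 2 (n - t) - 1 := by
  classical
  subst hn ht
  obtain ⟨Q, hQ, hQcard⟩ := exists_isVertexCover_card_eq_vertexCoverNumber G
  obtain ⟨q₀, hq₀⟩ : Q.Nonempty := by
    obtain ⟨⟨a, b⟩, hab⟩ := hE
    exact (hQ hab).elim (⟨a, ·⟩) (⟨b, ·⟩)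
  obtain ⟨u₀, hu₀, hadj⟩ := hQ.exists_adj_notMem hQcard hq₀
  obtain ⟨code, hinj, hcode⟩ := exists_injOn_eq_false (Finset.mem_compl.2 hu₀)
    (L := Nat.clog 2 (Fintype.card V - vertexCoverNumber G))
    (by rw [Finset.card_compl, hQcard]; exact Nat.le_pow_clog one_lt_two _)
  have hzero : ∀ v ∉ Q, code v = (fun _ => false) → G.Adj q₀ v := fun v hv hv₀ => by
    rwa [hinj (by simpa using hv) (by simpa using hu₀) (hv₀.trans hcode.symm)]
  have := cubicity_le_of_hasCubeRep G
    (hasCubeRep_of_isVertexCover hQ hq₀ code (by simpa using hinj) hzero)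
  rw [Finset.card_erase_of_mem hq₀, hQcard] at this
  have := Finset.card_pos.2 ⟨q₀, hq₀⟩
  omega
end

section
/- Let G be a finite simple graph on a nonempty vertex set, and let t be the vertex cover number of G. Then box(G) ≤ ⌊t/2⌋ + 1. -/
/-- A `k`-box representation of `G`: assignments of axis-parallel boxes
(given by lower and upper corners) to vertices so that distinct vertices are
adjacent iff all their coordinate intervals intersect. -/
def HasBoxRep {V : Type*} (G : SimpleGraph V) (k : ℕ) : Prop :=
  ∃ a b : V → Fin k → ℝ,
    (∀ v i, a v i ≤ b v i) ∧
    ∀ u v : V, u ≠ v →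
      (G.Adj u v ↔ ∀ i : Fin k, (Set.Icc (a u i) (b u i) ∩ Set.Icc (a v i) (b v i)).Nonempty)

/-- The boxicity of `G`: the least `k` such that `G` has a `k`-box representation. -/
noncomputable def boxicity {V : Type*} (G : SimpleGraph V) : ℕ :=
  sInf {k : ℕ | HasBoxRep G k}

/-!
Let `Q` be a minimum vertex cover, so the vertices outside `Q` form an independent set. Pair up
the vertices of `Q` greedily, taking a non-adjacent pair as long as one exists; then of any two
non-adjacent vertices of `Q`, one lies in a non-adjacent pair, and at most one vertex `z` of `Q`
stays unpaired. Each pair `x, y` gets one interval coordinate, in which every edge of `G` is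
realised and `x, y` are separated from their non-neighbours: from all of them if `x, y` are
non-adjacent, from those outside `Q` otherwise. One more coordinate places the vertices outside `Q`
at distinct points and separates `z` from its non-neighbours outside `Q`. These
`⌊|Q|/2⌋ + 1` coordinates separate every non-adjacent pair.
-/

section BoxRepresentation

variable {V : Type*} {G : SimpleGraph V}

/-- The interval of `v` is `[(I v).1, (I v).2]`. -/
structure IsIntervalCoord (G : SimpleGraph V) (I : V → ℝ × ℝ) : Prop where
  fst_le_snd : ∀ v, (I v).1 ≤ (I v).2
  fst_le_snd_of_adj : ∀ ⦃u v⦄, G.Adj u v → (I u).1 ≤ (I v).2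

def Separates (I : V → ℝ × ℝ) (u v : V) : Prop :=
  (I u).2 < (I v).1 ∨ (I v).2 < (I u).1

theorem Separates.symm {I : V → ℝ × ℝ} {u v : V} (h : Separates I u v) : Separates I v u :=
  Or.symm h

theorem IsIntervalCoord.nonempty_inter_iff {I : V → ℝ × ℝ} (hI : IsIntervalCoord G I) (u v : V) :
    (Set.Icc (I u).1 (I u).2 ∩ Set.Icc (I v).1 (I v).2).Nonempty ↔ ¬ Separates I u v := by
  simp only [Set.Icc_inter_Icc, Set.nonempty_Icc, sup_le_iff, le_inf_iff, Separates, not_or,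
    not_lt, hI.fst_le_snd, true_and, and_true]

theorem hasBoxRep_of_fin_coords {k : ℕ} (I : Fin k → V → ℝ × ℝ) (hI : ∀ i, IsIntervalCoord G (I i))
    (hsep : ∀ u v, u ≠ v → ¬ G.Adj u v → ∃ i, Separates (I i) u v) : HasBoxRep G k := by
  refine ⟨fun v i => (I i v).1, fun v i => (I i v).2, fun v i => (hI i).fst_le_snd v,
    fun u v huv => ?_⟩
  simp only [(hI _).nonempty_inter_iff]
  refine ⟨fun hadj i hs => ?_, fun h => by_contra fun hnadj => ?_⟩
  · rcases hs with hs | hs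
    · exact hs.not_ge ((hI i).fst_le_snd_of_adj hadj.symm)
    · exact hs.not_ge ((hI i).fst_le_snd_of_adj hadj)
  · obtain ⟨i, hi⟩ := hsep u v huv hnadj
    exact h i hi

theorem hasBoxRep_of_coords {ι : Type*} [Fintype ι] {k : ℕ} (hk : Fintype.card ι ≤ k)
    (I : ι → V → ℝ × ℝ) (hI : ∀ i, IsIntervalCoord G (I i))
    (hsep : ∀ u v, u ≠ v → ¬ G.Adj u v → ∃ i, Separates (I i) u v) : HasBoxRep G k := by
  let e := Fintype.equivFin ι
  refine hasBoxRep_of_fin_coords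
    (fun j => if h : (j : ℕ) < Fintype.card ι then I (e.symm ⟨j, h⟩) else fun _ => (0, 0))
    (fun j => ?_) (fun u v huv hnadj => ?_)
  · split_ifs
    · exact hI _
    · exact ⟨fun _ => le_rfl, fun _ _ _ => le_rfl⟩
  · obtain ⟨i, hi⟩ := hsep u v huv hnadj
    refine ⟨⟨e i, (e i).2.trans_le hk⟩, ?_⟩
    simpa using hi

section Coordinates

variable [DecidableEq V] [DecidableRel G.Adj]

variable (G) in
def nonEdgeBox (x y v : V) : ℝ × ℝ :=
  if v = x then (-2, -1) else if v = y then (1, 2) else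
    (if G.Adj v x then -1 else 0, if G.Adj v y then 1 else 0)

theorem isIntervalCoord_nonEdgeBox {x y : V} (hxy : ¬ G.Adj x y) :
    IsIntervalCoord G (nonEdgeBox G x y) where
  fst_le_snd v := by unfold nonEdgeBox; split_ifs <;> norm_num
  fst_le_snd_of_adj u v huv := by
    have hvu := huv.symm
    unfold nonEdgeBox
    split_ifs <;> first | (norm_num; done) | simp_all

theorem separates_nonEdgeBox {x y u w : V} (hu : u = x ∨ u = y) (huw : u ≠ w)
    (hnadj : ¬ G.Adj u w) : Separates (nonEdgeBox G x y) u w := by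
  have hwu : ¬ G.Adj w u := fun h => hnadj h.symm
  unfold Separates nonEdgeBox
  rcases hu with rfl | rfl <;> split_ifs <;> first | (norm_num; done) | simp_all

variable (G) in
def edgeBox (Q : Finset V) (x y v : V) : ℝ × ℝ :=
  if v = x then (-2, 0) else if v = y then (0, 2) else if v ∈ Q then (-2, 3) else
    let t : ℝ := if G.Adj v x then (if G.Adj v y then 0 else -1) else (if G.Adj v y then 1 else 3)
    (t, t)

theorem isIntervalCoord_edgeBox {Q : Finset V} (hQ : IsVertexCover G Q) (x y : V) :
    IsIntervalCoord G (edgeBox G Q x y) where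
  fst_le_snd v := by unfold edgeBox; split_ifs <;> norm_num
  fst_le_snd_of_adj u v huv := by
    have hvu := huv.symm
    have := hQ huv
    unfold edgeBox
    split_ifs <;> first | (norm_num; done) | simp_all

theorem separates_edgeBox {Q : Finset V} {x y u w : V} (hxy : G.Adj x y) (hu : u = x ∨ u = y)
    (hw : w ∉ Q) (huw : u ≠ w) (hnadj : ¬ G.Adj u w) : Separates (edgeBox G Q x y) u w := by
  have hwu : ¬ G.Adj w u := fun h => hnadj h.symm
  unfold Separates edgeBox
  rcases hu with rfl | rfl <;> split_ifs <;> first | (norm_num; done) | simp_all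

variable (G) in
def pairBox (Q : Finset V) (x y : V) : V → ℝ × ℝ :=
  if G.Adj x y then edgeBox G Q x y else nonEdgeBox G x y

theorem isIntervalCoord_pairBox {Q : Finset V} (hQ : IsVertexCover G Q) (x y : V) :
    IsIntervalCoord G (pairBox G Q x y) := by
  unfold pairBox
  split_ifs with hxy
  exacts [isIntervalCoord_edgeBox hQ x y, isIntervalCoord_nonEdgeBox hxy]

theorem separates_pairBox_of_notMem {Q : Finset V} {x y u w : V} (hu : u = x ∨ u = y)
    (hw : w ∉ Q) (huw : u ≠ w) (hnadj : ¬ G.Adj u w) : Separates (pairBox G Q x y) u w := by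
  unfold pairBox
  split_ifs with hxy
  exacts [separates_edgeBox hxy hu hw huw hnadj, separates_nonEdgeBox hu huw hnadj]

theorem separates_pairBox_of_not_adj {Q : Finset V} {x y u w : V} (hxy : ¬ G.Adj x y)
    (hu : u = x ∨ u = y) (huw : u ≠ w) (hnadj : ¬ G.Adj u w) :
    Separates (pairBox G Q x y) u w := by
  rw [pairBox, if_neg hxy]
  exact separates_nonEdgeBox hu huw hnadj

variable (G) in
def coverBox (Q : Finset V) (z : V) (f : V → ℝ) (v : V) : ℝ × ℝ :=
  if v ∈ Q then (0, if v = z then 1 else 3) else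
    let t := (if G.Adj z v then 0 else 2) + f v
    (t, t)

variable {Q : Finset V} {z : V} {f : V → ℝ}

theorem isIntervalCoord_coverBox (hQ : IsVertexCover G Q) (hf : ∀ v, f v ∈ Set.Ico 0 1) :
    IsIntervalCoord G (coverBox G Q z f) where
  fst_le_snd v := by unfold coverBox; split_ifs <;> norm_num
  fst_le_snd_of_adj u v huv := by
    obtain ⟨hu0, hu1⟩ := hf u
    obtain ⟨hv0, hv1⟩ := hf v
    unfold coverBox
    by_cases hu : u ∈ Q
    · rw [if_pos hu]
      split_ifs <;> linarith
    · rw [if_neg hu, if_pos ((hQ huv).resolve_left hu)]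
      by_cases hvz : v = z
      · subst hvz
        simp only [if_pos huv.symm, ↓reduceIte]
        linarith
      · simp only [if_neg hvz]
        split_ifs <;> linarith

theorem separates_coverBox_of_notMem (hf : ∀ v, f v ∈ Set.Ico 0 1) (hinj : f.Injective)
    {u v : V} (hu : u ∉ Q) (hv : v ∉ Q) (huv : u ≠ v) : Separates (coverBox G Q z f) u v := by
  obtain ⟨hu0, hu1⟩ := hf u
  obtain ⟨hv0, hv1⟩ := hf v
  simp only [Separates, coverBox, if_neg hu, if_neg hv]
  refine lt_or_gt_of_ne fun h => huv (hinj ?_)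
  split_ifs at h <;> linarith

theorem separates_coverBox_center (hf : ∀ v, f v ∈ Set.Ico 0 1) (hz : z ∈ Q) {w : V}
    (hw : w ∉ Q) (hnadj : ¬ G.Adj z w) : Separates (coverBox G Q z f) z w := by
  left
  simp only [coverBox, if_pos hz, if_neg hw, if_neg hnadj, ↓reduceIte]
  linarith [(hf w).1]

end Coordinates

open Finset

structure IsPairing (G : SimpleGraph V) (Q : Finset V) (P : Finset (V × V)) (z : V) : Prop where
  two_mul_card_le : 2 * #P ≤ #Q
  eq_or_mem : ∀ q ∈ Q, q = z ∨ ∃ p ∈ P, q = p.1 ∨ q = p.2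
  exists_not_adj : ∀ u ∈ Q, ∀ v ∈ Q, u ≠ v → ¬ G.Adj u v →
    ∃ p ∈ P, ¬ G.Adj p.1 p.2 ∧ ((u = p.1 ∨ u = p.2) ∨ (v = p.1 ∨ v = p.2))

section Pairing

variable {Q : Finset V} {P : Finset (V × V)} {z : V}

theorem isPairing_empty (hQ : ∀ q ∈ Q, q = z) : IsPairing G Q ∅ z where
  two_mul_card_le := by simp
  eq_or_mem q hq := .inl (hQ q hq)
  exists_not_adj u hu v hv huv := absurd ((hQ u hu).trans (hQ v hv).symm) huv

variable [DecidableEq V]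

theorem IsPairing.insert {u v : V} (h : IsPairing G ((Q.erase u).erase v) P z) (hu : u ∈ Q)
    (hv : v ∈ Q) (huv : u ≠ v) (hclique : G.Adj u v → G.IsClique (Q : Set V)) :
    IsPairing G Q (insert (u, v) P) z where
  two_mul_card_le := by
    have hv' : v ∈ Q.erase u := mem_erase.2 ⟨huv.symm, hv⟩
    have := card_erase_add_one hu
    have := card_erase_add_one hv'
    have := card_insert_le (u, v) P
    have := h.two_mul_card_le
    omega
  eq_or_mem q hq := by
    by_cases hquv : q = u ∨ q = v
    · exact .inr ⟨(u, v), mem_insert_self _ _, hquv⟩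
    push Not at hquv
    obtain hqz | ⟨p, hp, hqp⟩ := h.eq_or_mem q (by simp [hq, hquv.1, hquv.2])
    · exact .inl hqz
    · exact .inr ⟨p, mem_insert_of_mem hp, hqp⟩
  exists_not_adj a ha b hb hab hnadj := by
    by_cases hab' : (a = u ∨ a = v) ∨ (b = u ∨ b = v)
    · exact ⟨(u, v), mem_insert_self _ _, fun h => hnadj (hclique h ha hb hab), hab'⟩
    push Not at hab'
    obtain ⟨p, hp, hpadj, hp'⟩ := h.exists_not_adj a (by simp [ha, hab'.1.1, hab'.1.2]) b
      (by simp [hb, hab'.2.1, hab'.2.2]) hab hnadj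
    exact ⟨p, mem_insert_of_mem hp, hpadj, hp'⟩

variable (G) in
theorem exists_isPairing [Nonempty V] (Q : Finset V) : ∃ P z, IsPairing G Q P z := by
  induction Q using Finset.strongInduction with
  | H Q ih =>
  by_cases hQ : 1 < #Q
  · obtain ⟨u, hu, v, hv, huv, hclique⟩ :
        ∃ u ∈ Q, ∃ v ∈ Q, u ≠ v ∧ (G.Adj u v → G.IsClique (Q : Set V)) := by
      by_cases hc : G.IsClique (Q : Set V)
      · obtain ⟨u, hu, v, hv, huv⟩ := one_lt_card.1 hQ
        exact ⟨u, hu, v, hv, huv, fun _ => hc⟩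
      · obtain ⟨u, hu, v, hv, huv, hnadj⟩ : ∃ u ∈ Q, ∃ v ∈ Q, u ≠ v ∧ ¬ G.Adj u v := by
          simpa [SimpleGraph.IsClique, Set.Pairwise] using hc
        exact ⟨u, hu, v, hv, huv, fun h => absurd h hnadj⟩
    obtain ⟨P, z, hP⟩ := ih _ ((erase_subset v _).trans_ssubset (erase_ssubset hu))
    exact ⟨_, z, hP.insert hu hv huv hclique⟩
  · obtain ⟨z, hz⟩ := card_le_one_iff_subset_singleton.1 (not_lt.1 hQ)
    exact ⟨∅, z, isPairing_empty fun q hq => mem_singleton.1 (hz hq)⟩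

variable [DecidableRel G.Adj] {f : V → ℝ}

theorem IsPairing.separates_of_mem_of_notMem (hP : IsPairing G Q P z)
    (hf : ∀ v, f v ∈ Set.Ico 0 1) {u w : V} (hu : u ∈ Q) (hw : w ∉ Q) (huw : u ≠ w)
    (hnadj : ¬ G.Adj u w) :
    Separates (coverBox G Q z f) u w ∨ ∃ p ∈ P, Separates (pairBox G Q p.1 p.2) u w := by
  obtain rfl | ⟨p, hp, hup⟩ := hP.eq_or_mem u hu
  · exact .inl (separates_coverBox_center hf hu hw hnadj)
  · exact .inr ⟨p, hp, separates_pairBox_of_notMem hup hw huw hnadj⟩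

theorem IsPairing.separates (hP : IsPairing G Q P z) (hf : ∀ v, f v ∈ Set.Ico 0 1)
    (hinj : f.Injective) {u v : V} (huv : u ≠ v) (hnadj : ¬ G.Adj u v) :
    Separates (coverBox G Q z f) u v ∨ ∃ p ∈ P, Separates (pairBox G Q p.1 p.2) u v := by
  by_cases hu : u ∈ Q <;> by_cases hv : v ∈ Q
  · obtain ⟨p, hp, hpadj, hup | hvp⟩ := hP.exists_not_adj u hu v hv huv hnadj
    · exact .inr ⟨p, hp, separates_pairBox_of_not_adj hpadj hup huv hnadj⟩
    · exact .inr ⟨p, hp, (separates_pairBox_of_not_adj hpadj hvp huv.symm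
        fun h => hnadj h.symm).symm⟩
  · exact hP.separates_of_mem_of_notMem hf hu hv huv hnadj
  · exact (hP.separates_of_mem_of_notMem hf hv hu huv.symm fun h => hnadj h.symm).imp
      Separates.symm fun ⟨p, hp, h⟩ => ⟨p, hp, h.symm⟩
  · exact .inl (separates_coverBox_of_notMem hf hinj hu hv huv)

end Pairing

theorem exists_embedding_Ico (α : Type*) [Countable α] : Nonempty (α ↪ Set.Ico (0 : ℝ) 1) := by
  rw [← Cardinal.lift_mk_le', Cardinal.mk_Ico_real zero_lt_one, Cardinal.lift_continuum]
  exact (Cardinal.lift_le_aleph0.2 Cardinal.mk_le_aleph0).trans Cardinal.aleph0_lt_continuum.le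

theorem hasBoxRep_of_isVertexCover [Countable V] [Nonempty V] {Q : Finset V}
    (hQ : IsVertexCover G Q) : HasBoxRep G (#Q / 2 + 1) := by
  classical
  obtain ⟨P, z, hP⟩ := exists_isPairing G Q
  obtain ⟨e⟩ := exists_embedding_Ico V
  have hf : ∀ v, (e v : ℝ) ∈ Set.Ico 0 1 := fun v => (e v).2
  have hinj : (fun v => (e v : ℝ)).Injective := Subtype.val_injective.comp e.injective
  refine hasBoxRep_of_coords (ι := Option P) ?_
    (fun i => i.elim (coverBox G Q z (e ·)) fun p => pairBox G Q p.1.1 p.1.2) ?_ ?_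
  · simp only [Fintype.card_option, Fintype.card_coe]
    have := hP.two_mul_card_le
    omega
  · rintro (_ | p)
    exacts [isIntervalCoord_coverBox hQ hf, isIntervalCoord_pairBox hQ _ _]
  · intro u v huv hnadj
    obtain h | ⟨p, hp, h⟩ := hP.separates hf hinj huv hnadj
    exacts [⟨none, h⟩, ⟨some ⟨p, hp⟩, h⟩]

theorem exists_isVertexCover_card_eq [Fintype V] (G : SimpleGraph V) :
    ∃ Q, IsVertexCover G Q ∧ #Q = vertexCoverNumber G := by
  have hne : {t | ∃ Q : Finset V, IsVertexCover G Q ∧ #Q = t}.Nonempty :=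
    ⟨_, univ, fun u _ _ => .inl (mem_univ u), rfl⟩
  exact Nat.sInf_mem hne

end BoxRepresentation

/-- Boxicity is at most `⌊t/2⌋ + 1` where `t` is the vertex cover number. -/
theorem boxicity_le_vertexCover {V : Type*} [Fintype V] [Nonempty V]
    (G : SimpleGraph V) (t : ℕ) (ht : t = vertexCoverNumber G) :
    boxicity G ≤ t / 2 + 1 := by
  obtain ⟨Q, hQ, hcard⟩ := exists_isVertexCover_card_eq G
  rw [ht, ← hcard]
  exact Nat.sInf_le (hasBoxRep_of_isVertexCover hQ)
end

section
/- Let G be a finite simple graph on a nonempty vertex set, and let ν(G) be the minimum cardinality of a maximal matching of G. Then box(G) ≤ ν(G) + 1. -/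
/-- `M` is a matching of `G`: a set of edges of `G`, pairwise sharing no vertex. -/
def IsMatchingSet {V : Type*} (G : SimpleGraph V) (M : Finset (Sym2 V)) : Prop :=
  (↑M : Set (Sym2 V)) ⊆ G.edgeSet ∧
  ∀ e ∈ M, ∀ f ∈ M, e ≠ f → ∀ x : V, x ∈ e → x ∉ f

/-- `M` is a maximal matching of `G`: a matching such that no edge of `G`
can be added to it while keeping it a matching. -/
def IsMaximalMatchingSet {V : Type*} [DecidableEq V] (G : SimpleGraph V)
    (M : Finset (Sym2 V)) : Prop :=
  IsMatchingSet G M ∧ ∀ e ∈ G.edgeSet, e ∉ M → ¬ IsMatchingSet G (insert e M)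

/-- `ν(G)`: the minimum cardinality of a maximal matching of `G`. -/
noncomputable def minMaximalMatching {V : Type*} [DecidableEq V] (G : SimpleGraph V) : ℕ :=
  sInf {k : ℕ | ∃ M : Finset (Sym2 V), IsMaximalMatchingSet G M ∧ M.card = k}

/-!
Let `M` be a maximal matching of `G`. Its vertex set `S` is a vertex cover with `|S| = 2|M|`.
Take a maximal matching `N` of the non-edges of `G` inside `S`; by maximality the rest
`U = S \ V(N)` is a clique, and `|N| + |U| / 2 = |M|`.

A `k`-box representation is the same as `k` interval supergraphs of `G` such that every
non-edge is separated in one of them. We use `|M| + 1`: one in which the independent set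
`V \ S` consists of distinct points and all of `S` of one long interval; one for each
`xy ∈ N`, separating `x` and `y` from all their non-neighbours; and one for each pair `xy`
of an arbitrary pairing of `U`, separating `x` and `y` from their non-neighbours outside `S`.
Two vertices of `U` need no separation, being adjacent.
-/

open Finset

section

variable {V : Type*} {G : SimpleGraph V}

section Matchings

variable [DecidableEq V]

def matchedVertices (M : Finset (Sym2 V)) : Finset V := M.biUnion Sym2.toFinset

theorem mem_matchedVertices {M : Finset (Sym2 V)} {v : V} :
    v ∈ matchedVertices M ↔ ∃ e ∈ M, v ∈ e := by
  simp [matchedVertices, Sym2.mem_toFinset]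

theorem IsMatchingSet.card_matchedVertices {M : Finset (Sym2 V)} (hM : IsMatchingSet G M) :
    #(matchedVertices M) = 2 * #M := by
  have hdisj : (M : Set (Sym2 V)).PairwiseDisjoint Sym2.toFinset :=
    fun e he f hf hef => Finset.disjoint_left.2 fun x hxe hxf =>
      hM.2 e he f hf hef x (Sym2.mem_toFinset.1 hxe) (Sym2.mem_toFinset.1 hxf)
  have hpair (e : Sym2 V) (he : e ∈ M) : #e.toFinset = 2 :=
    Sym2.card_toFinset_of_not_isDiag e (G.not_isDiag_of_mem_edgeSet (hM.1 he))
  rw [matchedVertices, card_biUnion hdisj, sum_congr rfl hpair, sum_const, smul_eq_mul, mul_comm]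

theorem IsMatchingSet.insert {M : Finset (Sym2 V)} {e : Sym2 V} (hM : IsMatchingSet G M)
    (he : e ∈ G.edgeSet) (hfree : ∀ v ∈ e, v ∉ matchedVertices M) :
    IsMatchingSet G (insert e M) := by
  refine ⟨by simpa [Set.insert_subset_iff] using ⟨he, hM.1⟩, ?_⟩
  intro f hf g hg hfg x hxf hxg
  rw [mem_insert] at hf hg
  rcases hf with rfl | hf <;> rcases hg with rfl | hg
  · exact hfg rfl
  · exact hfree x hxf (mem_matchedVertices.2 ⟨g, hg, hxg⟩)
  · exact hfree x hxg (mem_matchedVertices.2 ⟨f, hf, hxf⟩)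
  · exact hM.2 f hf g hg hfg x hxf hxg

theorem IsMaximalMatchingSet.mem_or_mem_of_adj {M : Finset (Sym2 V)}
    (hM : IsMaximalMatchingSet G M) {u v : V} (huv : G.Adj u v) :
    u ∈ matchedVertices M ∨ v ∈ matchedVertices M := by
  by_contra! hfree
  have hnew : s(u, v) ∉ M := fun h =>
    hfree.1 (mem_matchedVertices.2 ⟨_, h, Sym2.mem_mk_left u v⟩)
  refine hM.2 _ huv hnew (hM.1.insert huv fun w hw => ?_)
  rcases Sym2.mem_iff.1 hw with rfl | rfl
  exacts [hfree.1, hfree.2]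

theorem exists_isMaximalMatchingSet [Finite V] (G : SimpleGraph V) :
    ∃ M, IsMaximalMatchingSet G M := by
  have : Nonempty {M // IsMatchingSet G M} := ⟨∅, by simp [IsMatchingSet]⟩
  obtain ⟨⟨M, hM⟩, hmax⟩ := Finite.exists_max fun M : {M // IsMatchingSet G M} => #M.1
  refine ⟨M, hM, fun e _ heM hins => ?_⟩
  have := hmax ⟨_, hins⟩
  rw [card_insert_of_notMem heM] at this
  exact (Nat.lt_succ_self _).not_ge this

end Matchings

structure IntervalSupergraph (G : SimpleGraph V) where
  lo : V → ℝ
  hi : V → ℝ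
  lo_le_hi (v : V) : lo v ≤ hi v
  lo_le_hi_of_adj {u v : V} : G.Adj u v → lo u ≤ hi v

namespace IntervalSupergraph

def Separates (I : IntervalSupergraph G) (u v : V) : Prop := I.hi u < I.lo v ∨ I.hi v < I.lo u

theorem Separates.symm {I : IntervalSupergraph G} {u v : V} (h : I.Separates u v) :
    I.Separates v u :=
  Or.symm h

section Constructions

open Classical

variable (W : Set V) (hW : ∀ u v, G.Adj u v → u ∈ W ∨ v ∈ W)

noncomputable def ofVertexCover [Fintype V] : IntervalSupergraph G where
  lo v := if v ∈ W then 0 else (Fintype.equivFin V v : ℕ)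
  hi v := if v ∈ W then Fintype.card V else (Fintype.equivFin V v : ℕ)
  lo_le_hi v := by split_ifs <;> simp
  lo_le_hi_of_adj {u v} h := by
    have hlt (w : V) : ((Fintype.equivFin V w : ℕ) : ℝ) ≤ Fintype.card V :=
      by exact_mod_cast (Fintype.equivFin V w).isLt.le
    split_ifs with hu hv hv
    · positivity
    · positivity
    · exact hlt u
    · exact absurd (hW u v h) (by tauto)

theorem separates_ofVertexCover [Fintype V] {u v : V} (hu : u ∉ W) (hv : v ∉ W)
    (huv : u ≠ v) :
    (ofVertexCover W hW).Separates u v := by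
  have : ((Fintype.equivFin V u : ℕ) : ℝ) ≠ (Fintype.equivFin V v : ℕ) := by
    simpa [Fin.val_inj] using huv
  simpa [Separates, ofVertexCover, hu, hv, or_comm] using this.lt_or_gt

noncomputable def ofNotAdj (x y : V) (hxy : ¬ G.Adj x y) : IntervalSupergraph G where
  lo v := if v = x then 0 else if v = y then 3 else if G.Adj x v then 0 else 1
  hi v := if v = x then 0 else if v = y then 3 else if G.Adj y v then 3 else 2
  lo_le_hi v := by split_ifs <;> norm_num
  lo_le_hi_of_adj {u v} h := by
    have := h.ne
    split_ifs <;> subst_vars <;> first | (norm_num; done) | simp_all [G.adj_comm]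

theorem separates_ofNotAdj {x y : V} (hxy : ¬ G.Adj x y) {w v : V} (hw : w = x ∨ w = y)
    (hvw : v ≠ w) (h : ¬ G.Adj w v) : (ofNotAdj x y hxy).Separates w v := by
  dsimp only [Separates, ofNotAdj]
  rcases hw with rfl | rfl <;> split_ifs <;> subst_vars <;> first | (norm_num; done) | simp_all

/-- There are no edges outside the vertex cover `W`, so a vertex outside `W` only has to meet
`x`, `y` and the common interval `[0, 4]` of the vertices of `W`. -/
noncomputable def ofAdj (x y : V) (hxy : G.Adj x y) : IntervalSupergraph G where
  lo v := if v = x then 1 else if v = y then 2 else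
    if v ∈ W ∨ G.Adj x v then 0 else if G.Adj y v then 3 else 4
  hi v := if v = x then 2 else if v = y then 3 else
    if v ∈ W ∨ G.Adj y v then 4 else if G.Adj x v then 1 else 4
  lo_le_hi v := by split_ifs <;> first | (norm_num; done) | simp_all
  lo_le_hi_of_adj {u v} h := by
    have := h.ne
    have := hxy.ne
    rcases hW u v h with _ | _ <;>
      split_ifs <;> subst_vars <;> first | (norm_num; done) | simp_all [G.adj_comm]

theorem separates_ofAdj {x y : V} (hxy : G.Adj x y) {w v : V} (hw : w = x ∨ w = y) (hv : v ∉ W)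
    (hvw : v ≠ w) (h : ¬ G.Adj w v) : (ofAdj W hW x y hxy).Separates w v := by
  have := hxy.ne
  dsimp only [Separates, ofAdj]
  rcases hw with rfl | rfl <;> split_ifs <;> subst_vars <;>
    first | (norm_num; done) | simp_all [G.adj_comm]

end Constructions

end IntervalSupergraph

theorem Set.Icc_inter_Icc_nonempty_iff {α : Type*} [Lattice α] {a b c d : α} (hab : a ≤ b)
    (hcd : c ≤ d) : (Set.Icc a b ∩ Set.Icc c d).Nonempty ↔ a ≤ d ∧ c ≤ b := by
  rw [Set.Icc_inter_Icc, Set.nonempty_Icc, sup_le_iff, le_inf_iff, le_inf_iff]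
  tauto

theorem hasBoxRep_of_separating {ι : Type*} [Fintype ι] (I : ι → IntervalSupergraph G)
    (hsep : ∀ u v, u ≠ v → ¬ G.Adj u v → ∃ i, (I i).Separates u v) :
    HasBoxRep G (Fintype.card ι) := by
  let e := Fintype.equivFin ι
  refine ⟨fun v j => (I (e.symm j)).lo v, fun v j => (I (e.symm j)).hi v,
    fun v j => (I _).lo_le_hi v, fun u v huv => ?_⟩
  simp only [Set.Icc_inter_Icc_nonempty_iff ((I _).lo_le_hi _) ((I _).lo_le_hi _)]
  refine ⟨fun h _ => ⟨(I _).lo_le_hi_of_adj h, (I _).lo_le_hi_of_adj h.symm⟩,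
    fun hall => ?_⟩
  by_contra hnadj
  obtain ⟨i, hi⟩ := hsep u v huv hnadj
  have := hall (e i)
  simp only [Equiv.symm_apply_apply] at this
  rcases hi with hi | hi <;> linarith [this.1, this.2]

open IntervalSupergraph in
theorem hasBoxRep_of_nonEdges_clique_cover [Fintype V] [DecidableEq V] (N : Finset (Sym2 V))
    (hN : ∀ e ∈ N, e ∉ G.edgeSet) (U : Finset V) (hU : G.IsClique (U : Set V)) (r : ℕ)
    (hr : #U = 2 * r)
    (hcover :
      ∀ u v, G.Adj u v → u ∈ matchedVertices N ∪ U ∨ v ∈ matchedVertices N ∪ U) :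
    HasBoxRep G (#N + r + 1) := by
  set W := matchedVertices N ∪ U
  obtain ⟨σ⟩ : Nonempty (Fin r × Bool ≃ U) :=
    ⟨Fintype.equivOfCardEq (by simp [hr, mul_comm])⟩
  have hσ (i : Fin r) : G.Adj (σ (i, false)) (σ (i, true)) :=
    hU (σ _).2 (σ _).2 (Subtype.coe_injective.ne (σ.injective.ne (by simp)))
  have hends (e : Sym2 V) : ∃ x y, e = s(x, y) := e.ind fun x y => ⟨x, y, rfl⟩
  choose x y hxy using hends
  let I : Option (N ⊕ Fin r) → IntervalSupergraph G
    | none => ofVertexCover W hcover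
    | some (.inl e) =>
      ofNotAdj (x e) (y e) (by rw [← SimpleGraph.mem_edgeSet, ← hxy]; exact hN e.1 e.2)
    | some (.inr i) => ofAdj W hcover _ _ (hσ i)
  have hcard : Fintype.card (Option (N ⊕ Fin r)) = #N + r + 1 := by simp
  rw [← hcard]
  refine hasBoxRep_of_separating I fun u v huv hadj => ?_
  wlog h : u ∈ matchedVertices N ∨ (u ∈ U ∧ v ∉ W) generalizing u v
  · by_cases h' : v ∈ matchedVertices N ∨ (v ∈ U ∧ u ∉ W)
    · obtain ⟨i, hi⟩ := this v u huv.symm (fun h => hadj h.symm) h'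
      exact ⟨i, hi.symm⟩
    simp only [W, mem_union, not_or, not_and, not_not] at h h'
    by_cases hu : u ∈ U
    · exact absurd (hU hu (by tauto) huv) hadj
    · exact ⟨none,
        separates_ofVertexCover W hcover (by simp [W]; tauto) (by simp [W]; tauto) huv⟩
  rcases h with hu | ⟨hu, hv⟩
  · obtain ⟨e, he, hue⟩ := mem_matchedVertices.1 hu
    rw [hxy e, Sym2.mem_iff] at hue
    exact ⟨some (.inl ⟨e, he⟩), separates_ofNotAdj _ hue huv.symm hadj⟩
  · obtain ⟨⟨i, β⟩, hi⟩ := σ.surjective ⟨u, hu⟩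
    refine ⟨some (.inr i), separates_ofAdj W hcover _ ?_ hv huv.symm hadj⟩
    cases β <;> simp [hi]

theorem IsMaximalMatchingSet.exists_nonEdges_clique_cover [Finite V] [DecidableEq V]
    {M : Finset (Sym2 V)} (hM : IsMaximalMatchingSet G M) :
    ∃ (N : Finset (Sym2 V)) (U : Finset V) (r : ℕ), (∀ e ∈ N, e ∉ G.edgeSet) ∧
      G.IsClique (U : Set V) ∧ #U = 2 * r ∧ #N + r = #M ∧
      ∀ u v, G.Adj u v → u ∈ matchedVertices N ∪ U ∨ v ∈ matchedVertices N ∪ U := by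
  set S := matchedVertices M
  obtain ⟨N, hN⟩ := exists_isMaximalMatchingSet (.fromEdgeSet ((S : Set V).sym2 \ G.edgeSet))
  have hNedge (e : Sym2 V) (he : e ∈ N) : e ∈ (S : Set V).sym2 \ G.edgeSet := by
    have := hN.1.1 he
    rw [SimpleGraph.edgeSet_fromEdgeSet] at this
    exact this.1
  have hNS : matchedVertices N ⊆ S := fun v hv => by
    obtain ⟨e, he, hve⟩ := mem_matchedVertices.1 hv
    exact Set.mem_sym2_iff_subset.1 (hNedge e he).1 hve
  refine ⟨N, S \ matchedVertices N, #M - #N, fun e he => (hNedge e he).2, ?_, ?_, ?_, ?_⟩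
  · intro u hu v hv huv
    simp only [coe_sdiff, Set.mem_sdiff, mem_coe] at hu hv
    by_contra hadj
    rcases hN.mem_or_mem_of_adj (u := u) (v := v) (by simp [hu.1, hv.1, hadj, huv]) with h | h
    exacts [hu.2 h, hv.2 h]
  · have := card_le_card hNS
    rw [card_sdiff_of_subset hNS, hM.1.card_matchedVertices, hN.1.card_matchedVertices] at *
    omega
  · have := card_le_card hNS
    rw [hM.1.card_matchedVertices, hN.1.card_matchedVertices] at this
    omega
  · rw [union_sdiff_of_subset hNS]
    exact fun u v => hM.mem_or_mem_of_adj

end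

theorem boxicity_le_minMaximalMatching_general {V : Type*} [Fintype V] [DecidableEq V]
    (G : SimpleGraph V) :
    boxicity G ≤ minMaximalMatching G + 1 := by
  obtain ⟨M₀, hM₀⟩ := exists_isMaximalMatchingSet G
  obtain ⟨M, hM, hν⟩ := Nat.sInf_mem (⟨_, M₀, hM₀, rfl⟩ :
    {k | ∃ M : Finset (Sym2 V), IsMaximalMatchingSet G M ∧ #M = k}.Nonempty)
  obtain ⟨N, U, r, hN, hU, hr, hNr, hcover⟩ := hM.exists_nonEdges_clique_cover
  apply Nat.sInf_le
  rw [Set.mem_ofPred_eq, minMaximalMatching, ← hν, ← hNr]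
  exact hasBoxRep_of_nonEdges_clique_cover N hN U hU r hr hcover

/-- Boxicity is at most `ν(G) + 1`, where `ν(G)` is the minimum cardinality of a
maximal matching of `G`. -/
theorem boxicity_le_minMaximalMatching {V : Type*} [Fintype V] [DecidableEq V] [Nonempty V]
    (G : SimpleGraph V) :
    boxicity G ≤ minMaximalMatching G + 1 :=
  boxicity_le_minMaximalMatching_general G
end

section
/- Let G be a finite simple bipartite graph with bipartition (V₁, V₂) (every edge of G has one endpoint in V₁ and the other in V₂), where |V₁| = n₁, |V₂| = n₂ and 3 ≤ n₁ ≤ n₂. Then box(G) ≤ ⌈n₁/2⌉; in particular box(G) ≤ min{⌈n₁/2⌉, ⌈n₂/2⌉}. -/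
section

variable {V : Type*} {G : SimpleGraph V}

structure IntervalLayer (G : SimpleGraph V) where
  lo : V → ℕ
  hi : V → ℕ
  lo_le_hi : ∀ v, lo v ≤ hi v
  overlap_of_adj : ∀ ⦃u v⦄, G.Adj u v → lo u ≤ hi v ∧ lo v ≤ hi u

namespace IntervalLayer

def Separates (L : IntervalLayer G) (u v : V) : Prop :=
  L.hi u < L.lo v ∨ L.hi v < L.lo u

theorem Separates.symm {L : IntervalLayer G} {u v : V} (h : L.Separates u v) :
    L.Separates v u :=
  Or.symm h

theorem not_separates_of_adj (L : IntervalLayer G) {u v : V} (h : G.Adj u v) :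
    ¬L.Separates u v := by
  have := L.overlap_of_adj h
  unfold Separates
  omega

theorem cast_Icc_inter_nonempty_iff (L : IntervalLayer G) (u v : V) :
    (Set.Icc (L.lo u : ℝ) (L.hi u) ∩ Set.Icc (L.lo v : ℝ) (L.hi v)).Nonempty ↔
      ¬L.Separates u v := by
  have := L.lo_le_hi u
  have := L.lo_le_hi v
  simp only [Set.Icc_inter_Icc, Set.nonempty_Icc, max_le_iff, le_min_iff, Nat.cast_le,
    Separates]
  omega

def ofBipartite {A : Set V} (hG : G.IsBipartiteWith A Aᶜ) (lo hi : V → ℕ)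
    (lo_le_hi : ∀ v, lo v ≤ hi v)
    (overlap : ∀ ⦃a b⦄, a ∈ A → b ∉ A → G.Adj a b → lo a ≤ hi b ∧ lo b ≤ hi a) :
    IntervalLayer G where
  lo := lo
  hi := hi
  lo_le_hi := lo_le_hi
  overlap_of_adj u v h := by
    rcases hG.mem_of_adj h with ⟨hu, hv⟩ | ⟨hu, hv⟩
    · exact overlap hu hv h
    · exact (overlap hv hu h.symm).symm

end IntervalLayer

theorem hasBoxRep_of_layers {k : ℕ} (L : Fin k → IntervalLayer G)
    (hsep : ∀ u v, u ≠ v → ¬G.Adj u v → ∃ i, (L i).Separates u v) : HasBoxRep G k := by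
  refine ⟨fun v i => (L i).lo v, fun v i => (L i).hi v,
    fun v i => Nat.cast_le.mpr ((L i).lo_le_hi v), fun u v huv => ?_⟩
  simp only [IntervalLayer.cast_Icc_inter_nonempty_iff]
  refine ⟨fun h i => (L i).not_separates_of_adj h, fun h => ?_⟩
  by_contra hnadj
  obtain ⟨i, hi⟩ := hsep u v huv hnadj
  exact h i hi

section Layers

open Classical Fintype

variable [Fintype V] {A : Set V}

noncomputable def pairLayer (hG : G.IsBipartiteWith A Aᶜ) (x y : V) (hx : x ∈ A) (hy : y ∈ A) :
    IntervalLayer G :=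
  .ofBipartite hG
    (fun w => if w = x then 0 else if w = y then card V + 1
      else if w ∈ A then equivFin V w + 1 else if G.Adj x w then 0 else 1)
    (fun w => if w = x then 0 else if w = y then card V + 1
      else if w ∈ A then equivFin V w + 1 else if G.Adj y w then card V + 1 else card V)
    (fun w => by have := (equivFin V w).isLt; split_ifs <;> omega)
    (fun a b ha hb hab => by
      have hbx : b ≠ x := fun h => hb (h ▸ hx)
      have hby : b ≠ y := fun h => hb (h ▸ hy)
      simp only [if_neg hbx, if_neg hby, if_neg hb, if_pos ha]
      split_ifs <;> simp_all)

noncomputable def pointLayer (hG : G.IsBipartiteWith A Aᶜ) (x y : V) (hx : x ∈ A) (hy : y ∈ A) :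
    IntervalLayer G :=
  -- blocks: adjacent to `x` only, to both, to `y` only, to neither
  let pos w := card V * (if G.Adj x w then (if G.Adj y w then 1 else 0)
    else if G.Adj y w then 2 else 3) + equivFin V w + 1
  .ofBipartite hG
    (fun w => if w = x then 1 else if w = y then card V + 1 else if w ∈ A then 0 else pos w)
    (fun w => if w = x then 2 * card V else if w = y then 3 * card V
      else if w ∈ A then 4 * card V else pos w)
    (fun w => by have := (equivFin V w).isLt; split_ifs <;> omega)
    (fun a b ha hb hab => by
      have hbx : b ≠ x := fun h => hb (h ▸ hx)
      have hby : b ≠ y := fun h => hb (h ▸ hy)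
      have := (equivFin V b).isLt
      simp only [pos, if_neg hbx, if_neg hby, if_neg hb, if_pos ha]
      split_ifs <;> simp_all <;> omega)

variable (hG : G.IsBipartiteWith A Aᶜ) {x y : V} (hx : x ∈ A) (hy : y ∈ A)
include hG hx hy

theorem pairLayer_separates_left {w : V} (hw : x ≠ w) (hxw : ¬G.Adj x w) :
    (pairLayer hG x y hx hy).Separates x w := by
  left
  simp only [pairLayer, IntervalLayer.ofBipartite, if_neg hw.symm, hxw, ↓reduceIte]
  split_ifs <;> omega

theorem pairLayer_separates_right {w : V} (hw : y ≠ w) (hyw : ¬G.Adj y w) :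
    (pairLayer hG x y hx hy).Separates y w := by
  rcases eq_or_ne y x with rfl | hyx
  · exact pairLayer_separates_left hG hx hy hw hyw
  right
  have := (equivFin V w).isLt
  simp only [pairLayer, IntervalLayer.ofBipartite, if_neg hyx, if_neg hw.symm, hyw, ↓reduceIte]
  split_ifs <;> omega

theorem pairLayer_separates_of_mem {u v : V} (hu : u ∈ A) (hv : v ∈ A) (huv : u ≠ v)
    (hux : u ≠ x) (huy : u ≠ y) (hvx : v ≠ x) (hvy : v ≠ y) :
    (pairLayer hG x y hx hy).Separates u v := by
  have : (equivFin V u : ℕ) ≠ equivFin V v := fun h => huv ((equivFin V).injective (Fin.ext h))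
  simp only [pairLayer, IntervalLayer.ofBipartite, IntervalLayer.Separates, if_neg hux, if_neg huy,
    if_neg hvx, if_neg hvy, if_pos hu, if_pos hv]
  omega

theorem pointLayer_separates_left {v : V} (hv : v ∉ A) (hxv : ¬G.Adj x v) :
    (pointLayer hG x y hx hy).Separates x v := by
  have hvx : v ≠ x := fun h => hv (h ▸ hx)
  have hvy : v ≠ y := fun h => hv (h ▸ hy)
  left
  simp only [pointLayer, IntervalLayer.ofBipartite, if_neg hvx, if_neg hvy, if_neg hv, hxv,
    ↓reduceIte]
  split_ifs <;> omega

theorem pointLayer_separates_right {v : V} (hv : v ∉ A) (hyv : ¬G.Adj y v) :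
    (pointLayer hG x y hx hy).Separates y v := by
  rcases eq_or_ne y x with rfl | hyx
  · exact pointLayer_separates_left hG hx hy hv hyv
  have hvx : v ≠ x := fun h => hv (h ▸ hx)
  have hvy : v ≠ y := fun h => hv (h ▸ hy)
  have := (equivFin V v).isLt
  simp only [pointLayer, IntervalLayer.ofBipartite, IntervalLayer.Separates, if_neg hvx,
    if_neg hvy, if_neg hv, if_neg hyx, hyv, ↓reduceIte]
  split_ifs <;> omega

theorem pointLayer_separates_of_not_mem {u v : V} (hu : u ∉ A) (hv : v ∉ A) (huv : u ≠ v) :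
    (pointLayer hG x y hx hy).Separates u v := by
  have hux : u ≠ x := fun h => hu (h ▸ hx)
  have huy : u ≠ y := fun h => hu (h ▸ hy)
  have hvx : v ≠ x := fun h => hv (h ▸ hx)
  have hvy : v ≠ y := fun h => hv (h ▸ hy)
  have := (equivFin V u).isLt
  have := (equivFin V v).isLt
  have : (equivFin V u : ℕ) ≠ equivFin V v := fun h => huv ((equivFin V).injective (Fin.ext h))
  simp only [pointLayer, IntervalLayer.ofBipartite, IntervalLayer.Separates, if_neg hux,
    if_neg huy, if_neg hvx, if_neg hvy, if_neg hu, if_neg hv]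
  split_ifs <;> omega

end Layers

theorem hasBoxRep_of_pairs_cover [Fintype V] {A : Set V} (hG : G.IsBipartiteWith A Aᶜ) {m : ℕ}
    (p : Fin (m + 2) → V × V) (hp : ∀ i, (p i).1 ∈ A ∧ (p i).2 ∈ A)
    (hcover : ∀ a ∈ A, ∃ i, a = (p i).1 ∨ a = (p i).2) : HasBoxRep G (m + 2) := by
  let L : Fin (m + 2) → IntervalLayer G := Fin.snoc (α := fun _ => IntervalLayer G)
    (fun i => pairLayer hG _ _ (hp i.castSucc).1 (hp i.castSucc).2)
    (pointLayer hG _ _ (hp (Fin.last _)).1 (hp (Fin.last _)).2)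
  refine hasBoxRep_of_layers L fun u v huv hnadj => ?_
  let Paired (w : V) : Prop := ∃ i : Fin (m + 1), w = (p i.castSucc).1 ∨ w = (p i.castSucc).2
  wlog h : Paired u ∨ ¬Paired v ∧ (u ∈ A ∨ v ∉ A) generalizing u v
  · obtain ⟨j, hj⟩ := this v u huv.symm (fun h => hnadj h.symm) (by tauto)
    exact ⟨j, hj.symm⟩
  by_cases hpu : Paired u
  · obtain ⟨i, hi⟩ := hpu
    refine ⟨i.castSucc, ?_⟩
    simp only [L, Fin.snoc_castSucc]
    rcases hi with rfl | rfl
    · exact pairLayer_separates_left hG _ _ huv hnadj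
    · exact pairLayer_separates_right hG _ _ huv hnadj
  obtain ⟨hpv, huv'⟩ := h.resolve_left hpu
  by_cases hu : u ∈ A
  · by_cases hv : v ∈ A
    · refine ⟨(0 : Fin (m + 1)).castSucc, ?_⟩
      simp only [L, Fin.snoc_castSucc]
      exact pairLayer_separates_of_mem hG _ _ hu hv huv (fun h => hpu ⟨0, .inl h⟩)
        (fun h => hpu ⟨0, .inr h⟩) (fun h => hpv ⟨0, .inl h⟩) (fun h => hpv ⟨0, .inr h⟩)
    · refine ⟨Fin.last _, ?_⟩
      simp only [L, Fin.snoc_last]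
      obtain ⟨i, hi⟩ := hcover u hu
      obtain ⟨j, rfl⟩ | rfl := Fin.eq_castSucc_or_eq_last i
      · exact absurd ⟨j, hi⟩ hpu
      rcases hi with rfl | rfl
      · exact pointLayer_separates_left hG _ _ hv hnadj
      · exact pointLayer_separates_right hG _ _ hv hnadj
  · have hv : v ∉ A := huv'.resolve_left hu
    refine ⟨Fin.last _, ?_⟩
    simp only [L, Fin.snoc_last]
    exact pointLayer_separates_of_not_mem hG _ _ hu hv huv

open Finset in
theorem Finset.exists_pairs_cover (A : Finset V) (hA : A.Nonempty) {n : ℕ} (hcard : #A ≤ 2 * n) :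
    ∃ p : Fin n → V × V,
      (∀ i, (p i).1 ∈ A ∧ (p i).2 ∈ A) ∧ ∀ a ∈ A, ∃ i, a = (p i).1 ∨ a = (p i).2 := by
  have hpos : 0 < #A := hA.card_pos
  let f (j : ℕ) : V := A.equivFin.symm ⟨min j (#A - 1), by omega⟩
  refine ⟨fun i => (f (2 * i), f (2 * i + 1)), fun i => ⟨(A.equivFin.symm _).2,
    (A.equivFin.symm _).2⟩, fun a ha => ?_⟩
  set j : ℕ := (A.equivFin ⟨a, ha⟩ : ℕ)
  have hj : j < #A := (A.equivFin _).isLt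
  have hfj : f j = a := by simp [f, j, min_eq_left (Nat.le_sub_one_of_lt hj)]
  refine ⟨⟨j / 2, by omega⟩, ?_⟩
  rcases (by omega : j = 2 * (j / 2) ∨ j = 2 * (j / 2) + 1) with h | h
  · exact .inl (hfj.symm.trans (congrArg f h))
  · exact .inr (hfj.symm.trans (congrArg f h))

end

theorem boxicity_bipartite_general {V : Type*} [Fintype V] [DecidableEq V] (G : SimpleGraph V)
    (V₁ V₂ : Finset V) (hdisj : Disjoint V₁ V₂) (hunion : V₁ ∪ V₂ = Finset.univ)
    (hbip : ∀ ⦃u v : V⦄, G.Adj u v → (u ∈ V₁ ∧ v ∈ V₂) ∨ (u ∈ V₂ ∧ v ∈ V₁))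
    (n₁ n₂ : ℕ) (hn₁ : n₁ = V₁.card)
    (h3 : 3 ≤ n₁) (h12 : n₁ ≤ n₂) :
    boxicity G ≤ (n₁ + 1) / 2 ∧ boxicity G ≤ min ((n₁ + 1) / 2) ((n₂ + 1) / 2) := by
  have hV₂ : V₂ = V₁ᶜ := IsCompl.eq_compl ⟨hdisj.symm, codisjoint_iff.mpr (by rwa [sup_comm])⟩
  have hG : G.IsBipartiteWith (V₁ : Set V) (V₁ : Set V)ᶜ := by
    rw [← Finset.coe_compl, ← hV₂]
    exact ⟨Finset.disjoint_coe.mpr hdisj, hbip⟩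
  obtain ⟨m, hm⟩ : ∃ m, (n₁ + 1) / 2 = m + 2 := ⟨(n₁ + 1) / 2 - 2, by omega⟩
  obtain ⟨p, hp, hcover⟩ :=
    V₁.exists_pairs_cover (Finset.card_pos.mp (by omega)) (n := m + 2) (by omega)
  have hbox : boxicity G ≤ (n₁ + 1) / 2 :=
    hm ▸ Nat.sInf_le (hasBoxRep_of_pairs_cover hG p hp hcover)
  exact ⟨hbox, le_min hbox (hbox.trans (Nat.div_le_div_right (by omega)))⟩

/-- For a bipartite graph `G` with bipartition `(V₁, V₂)`, `|V₁| = n₁`, `|V₂| = n₂`,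
`3 ≤ n₁ ≤ n₂`, we have `box(G) ≤ ⌈n₁/2⌉`, and in particular
`box(G) ≤ min {⌈n₁/2⌉, ⌈n₂/2⌉}`. -/
theorem boxicity_bipartite {V : Type*} [Fintype V] [DecidableEq V] (G : SimpleGraph V)
    (V₁ V₂ : Finset V) (hdisj : Disjoint V₁ V₂) (hunion : V₁ ∪ V₂ = Finset.univ)
    (hbip : ∀ ⦃u v : V⦄, G.Adj u v → (u ∈ V₁ ∧ v ∈ V₂) ∨ (u ∈ V₂ ∧ v ∈ V₁))
    (n₁ n₂ : ℕ) (hn₁ : n₁ = V₁.card) (hn₂ : n₂ = V₂.card)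
    (h3 : 3 ≤ n₁) (h12 : n₁ ≤ n₂) :
    boxicity G ≤ (n₁ + 1) / 2 ∧ boxicity G ≤ min ((n₁ + 1) / 2) ((n₂ + 1) / 2) :=
  boxicity_bipartite_general G V₁ V₂ hdisj hunion hbip n₁ n₂ hn₁ h3 h12
end

section
/- Let G be a finite simple graph on n ≥ 1 vertices with 2·box(G) ≤ n, and write box(G) = n/2 − s with s ≥ 0. Then χ(G) ≥ n/(2s + 2); equivalently, (n − 2·box(G) + 2) · χ(G) ≥ n. -/
/-!
If `A` is an independent set of an `n`-vertex graph, then `box G ≤ (n - |A|) / 2 + 1`. The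
vertices outside `A` are removed two at a time, each pair costing one interval dimension. If some
remaining pair `x, y` is non-adjacent, one dimension separates every non-edge at `x` or `y`;
otherwise the remaining vertices form a clique and an adjacent pair only has to be separated from
`A`. A final dimension puts the vertices of `A` at distinct points, which separates the non-edges
inside `A` and those to the at most one vertex left over. Since every colour class is independent,
`n ≤ χ(G) · α(G)`, and taking `|A| = α(G)` gives the theorem.
-/

namespace SimpleGraph

open Finset

variable {V : Type*} {G : SimpleGraph V}

/-- Since `G.Adj` is symmetric, the second condition says that `[p u, q u]` and `[p v, q v]`
meet whenever `u` and `v` are adjacent. -/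
def IsIntervalLayer (G : SimpleGraph V) (p q : V → ℝ) : Prop :=
  (∀ v, p v ≤ q v) ∧ ∀ u v, G.Adj u v → p u ≤ q v

def SeparatesNonAdj (G : SimpleGraph V) (k : ℕ) (P : V → V → Prop) : Prop :=
  ∃ p q : Fin k → V → ℝ, (∀ i, G.IsIntervalLayer (p i) (q i)) ∧
    ∀ u v, u ≠ v → ¬G.Adj u v → P u v → ∃ i, q i u < p i v ∨ q i v < p i u

namespace SeparatesNonAdj

variable {k m : ℕ} {P Q : V → V → Prop}

theorem mono (h : G.SeparatesNonAdj k P)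
    (hPQ : ∀ u v, u ≠ v → ¬G.Adj u v → Q u v → P u v) : G.SeparatesNonAdj k Q := by
  obtain ⟨p, q, hlayer, hsep⟩ := h
  exact ⟨p, q, hlayer, fun u v huv hnadj hQ => hsep u v huv hnadj (hPQ u v huv hnadj hQ)⟩

theorem or_swap (h : G.SeparatesNonAdj k P) :
    G.SeparatesNonAdj k fun u v => P u v ∨ P v u := by
  obtain ⟨p, q, hlayer, hsep⟩ := h
  refine ⟨p, q, hlayer, fun u v huv hnadj hP => ?_⟩
  rcases hP with hP | hP
  · exact hsep u v huv hnadj hP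
  · obtain ⟨i, hi⟩ := hsep v u huv.symm (fun h => hnadj h.symm) hP
    exact ⟨i, hi.symm⟩

theorem add (hP : G.SeparatesNonAdj k P) (hQ : G.SeparatesNonAdj m Q) :
    G.SeparatesNonAdj (k + m) fun u v => P u v ∨ Q u v := by
  obtain ⟨p, q, hlayer, hsep⟩ := hP
  obtain ⟨p', q', hlayer', hsep'⟩ := hQ
  refine ⟨Fin.append p p', Fin.append q q', fun i => ?_, fun u v huv hnadj hPQ => ?_⟩
  · refine Fin.addCases (fun i => ?_) (fun i => ?_) i
    · simpa only [Fin.append_left] using hlayer i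
    · simpa only [Fin.append_right] using hlayer' i
  rcases hPQ with hPuv | hQuv
  · obtain ⟨i, hi⟩ := hsep u v huv hnadj hPuv
    exact ⟨Fin.castAdd m i, by simpa only [Fin.append_left] using hi⟩
  · obtain ⟨i, hi⟩ := hsep' u v huv hnadj hQuv
    exact ⟨Fin.natAdd k i, by simpa only [Fin.append_right] using hi⟩

theorem hasBoxRep (h : G.SeparatesNonAdj k fun _ _ => True) : HasBoxRep G k := by
  obtain ⟨p, q, hlayer, hsep⟩ := h
  refine ⟨fun v i => p i v, fun v i => q i v, fun v i => (hlayer i).1 v, fun u v huv => ?_⟩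
  simp only [Set.Icc_inter_Icc, Set.nonempty_Icc, max_le_iff, le_min_iff]
  constructor
  · intro hadj i
    exact ⟨⟨(hlayer i).1 u, (hlayer i).2 v u hadj.symm⟩, (hlayer i).2 u v hadj, (hlayer i).1 v⟩
  · intro hmeet
    by_contra hnadj
    obtain ⟨i, hi⟩ := hsep u v huv hnadj trivial
    have := hmeet i
    rcases hi with hi | hi <;> linarith [this.1.2, this.2.1]

end SeparatesNonAdj

theorem IsIntervalLayer.separatesNonAdj {p q : V → ℝ} {P : V → V → Prop}
    (hlayer : G.IsIntervalLayer p q)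
    (hsep : ∀ u v, u ≠ v → ¬G.Adj u v → P u v → q u < p v ∨ q v < p u) :
    G.SeparatesNonAdj 1 P :=
  ⟨fun _ => p, fun _ => q, fun _ => hlayer, fun u v huv hnadj hP => ⟨0, hsep u v huv hnadj hP⟩⟩

theorem separatesNonAdj_of_not_adj {x y : V} (hnadj : ¬G.Adj x y) :
    G.SeparatesNonAdj 1 fun u _ => u = x ∨ u = y := by
  classical
  let p : V → ℝ := fun v => if v = x then 0 else if v = y then 3 else if G.Adj v x then 1 else 2
  let q : V → ℝ := fun v => if v = x then 1 else if v = y then 4 else if G.Adj v y then 3 else 2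
  refine IsIntervalLayer.separatesNonAdj (p := p) (q := q) ⟨fun v => ?_, fun u v hadj => ?_⟩ ?_
  · simp only [p, q]
    split_ifs <;> norm_num
  · have := hadj.symm
    simp only [p, q]
    split_ifs <;> grind
  · rintro u v huv hnadj' huxy
    have : ¬G.Adj v u := fun h => hnadj' h.symm
    simp only [p, q]
    split_ifs <;> grind

theorem separatesNonAdj_of_adj {x y : V} {A : Set V} (hxy : G.Adj x y) (hA : G.IsIndepSet A) :
    G.SeparatesNonAdj 1 fun u v => (u = x ∨ u = y) ∧ v ∈ A := by
  classical
  let p : V → ℝ := fun v => if v = x then 0 else if v = y then 2 else if v ∈ A then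
    (if G.Adj v x then 0 else if G.Adj v y then 4 else 6) else 0
  let q : V → ℝ := fun v => if v = x then 3 else if v = y then 5 else if v ∈ A then
    (if G.Adj v y then 5 else if G.Adj v x then 1 else 6) else 6
  refine IsIntervalLayer.separatesNonAdj (p := p) (q := q) ⟨fun v => ?_, fun u v hadj => ?_⟩ ?_
  · simp only [p, q]
    split_ifs <;> norm_num
  · have := hadj.symm
    have hAuv : ¬(u ∈ A ∧ v ∈ A) := fun h => hA h.1 h.2 hadj.ne hadj
    simp only [p, q]
    split_ifs <;> grind
  · rintro u v huv hnadj ⟨huxy, hvA⟩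
    have : ¬G.Adj v u := fun h => hnadj h.symm
    simp only [p, q]
    split_ifs <;> grind

theorem separatesNonAdj_of_isIndepSet_of_subsingleton [Finite V] {A R : Set V}
    (hA : G.IsIndepSet A) (hR : R.Subsingleton) :
    G.SeparatesNonAdj 1 fun u v => u ∈ A ∧ (v ∈ A ∨ v ∈ R) := by
  classical
  obtain ⟨n, ⟨e⟩⟩ := Finite.exists_equiv_fin V
  let f : V → ℝ := fun v => e v + 1
  have hf_pos : ∀ v, 0 < f v := fun v => by positivity
  have hf_le : ∀ v, f v ≤ n := fun v => by
    simp only [f]; exact_mod_cast (e v).isLt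
  have hf_inj : f.Injective := fun u v h => e.injective (Fin.ext (by simpa [f] using h))
  -- the sign records adjacency to the vertex of `R`, whose interval will be `[-n, 0]`
  let pt : V → ℝ := fun v => if ∃ z ∈ R, G.Adj v z then -f v else f v
  have hpt_inj : pt.Injective := by
    intro u v h
    have := hf_pos u; have := hf_pos v
    simp only [pt] at h
    split_ifs at h <;> exact hf_inj (by linarith)
  let p : V → ℝ := fun v => if v ∈ A then pt v else -n
  let q : V → ℝ := fun v => if v ∈ A then pt v else if v ∈ R then 0 else n
  refine IsIntervalLayer.separatesNonAdj (p := p) (q := q) ⟨fun v => ?_, fun u v hadj => ?_⟩ ?_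
  · have := hf_pos v
    simp only [p, q]
    split_ifs <;> linarith
  · have hAuv : ¬(u ∈ A ∧ v ∈ A) := fun h => hA h.1 h.2 hadj.ne hadj
    have := hf_pos u; have := hf_le u; have := hf_le v; have := hf_pos v
    simp only [p, q, pt]
    split_ifs <;> grind
  · rintro u v huv hnadj ⟨huA, hv⟩
    by_cases hvA : v ∈ A
    · simp only [p, q, if_pos huA, if_pos hvA]
      exact (hpt_inj.ne huv).lt_or_gt
    · have hvR : v ∈ R := hv.resolve_left hvA
      have hu : ¬∃ z ∈ R, G.Adj u z := fun ⟨z, hzR, huz⟩ => hnadj (hR hzR hvR ▸ huz)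
      right
      simp only [p, q, pt, if_pos huA, if_neg hvA, if_pos hvR, if_neg hu]
      exact hf_pos u

theorem exists_pair_separatesNonAdj {A : Set V} {R : Finset V} (hA : G.IsIndepSet A)
    (hR : 1 < #R) : ∃ x ∈ R, ∃ y ∈ R, x ≠ y ∧
      G.SeparatesNonAdj 1 fun u v => (u = x ∨ u = y) ∧ (v ∈ A ∨ v ∈ R) := by
  by_cases h : ∃ x ∈ R, ∃ y ∈ R, x ≠ y ∧ ¬G.Adj x y
  · obtain ⟨x, hx, y, hy, hxy, hnadj⟩ := h
    exact ⟨x, hx, y, hy, hxy, (separatesNonAdj_of_not_adj hnadj).mono fun _ _ _ _ h => h.1⟩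
  · push Not at h
    obtain ⟨x, hx, y, hy, hxy⟩ := one_lt_card.mp hR
    refine ⟨x, hx, y, hy, hxy, (separatesNonAdj_of_adj (h x hx y hy hxy) hA).mono ?_⟩
    rintro u v huv hnadj ⟨hu, hv | hv⟩
    · exact ⟨hu, hv⟩
    · have huR : u ∈ R := by rcases hu with rfl | rfl <;> assumption
      exact absurd (h u huR v hv huv) hnadj

theorem separatesNonAdj_of_isIndepSet [Finite V] {A : Set V} (hA : G.IsIndepSet A)
    (R : Finset V) :
    G.SeparatesNonAdj (#R / 2 + 1) fun u v => (u ∈ A ∨ u ∈ R) ∧ (v ∈ A ∨ v ∈ R) := by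
  classical
  induction hn : #R using Nat.strong_induction_on generalizing R with
  | _ n ih =>
  rcases le_or_gt n 1 with hle | hlt
  · have hR : (R : Set V).Subsingleton := fun a ha b hb => card_le_one.mp (hn ▸ hle) a ha b hb
    rw [show n / 2 + 1 = 1 by omega]
    refine (separatesNonAdj_of_isIndepSet_of_subsingleton hA hR).or_swap.mono ?_
    rintro u v huv - ⟨hu | hu, hv | hv⟩
    · exact .inl ⟨hu, .inl hv⟩
    · exact .inl ⟨hu, .inr hv⟩
    · exact .inr ⟨hv, .inr hu⟩
    · exact absurd (hR hu hv) huv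
  · obtain ⟨x, hx, y, hy, hxy, hsep⟩ := exists_pair_separatesNonAdj hA (hn ▸ hlt)
    have hcard : #((R.erase x).erase y) = n - 2 := by
      rw [card_erase_of_mem (mem_erase.mpr ⟨hxy.symm, hy⟩), card_erase_of_mem hx, hn]
      omega
    rw [show n / 2 + 1 = (n - 2) / 2 + 1 + 1 by omega]
    refine ((ih (n - 2) (by omega) _ hcard).add hsep.or_swap).mono ?_
    rintro u v - - ⟨hu, hv⟩
    by_cases hu' : u = x ∨ u = y
    · exact .inr (.inl ⟨hu', hv⟩)
    by_cases hv' : v = x ∨ v = y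
    · exact .inr (.inr ⟨hv', hu⟩)
    push Not at hu' hv'
    simp only [mem_erase]
    tauto

theorem boxicity_le_of_isIndepSet [Fintype V] {A : Finset V} (hA : G.IsIndepSet A) :
    boxicity G ≤ (Fintype.card V - #A) / 2 + 1 := by
  classical
  have hrep := (separatesNonAdj_of_isIndepSet hA (univ \ A)).mono (Q := fun _ _ => True)
    fun u v _ _ _ => by
    simp only [mem_coe, mem_sdiff, mem_univ, true_and]
    tauto
  rw [card_sdiff_of_subset (subset_univ A), card_univ] at hrep
  exact Nat.sInf_le hrep.hasBoxRep

theorem card_le_mul_indepNum [Fintype V] {k : ℕ} (hc : G.Colorable k) :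
    Fintype.card V ≤ k * G.indepNum := by
  classical
  obtain ⟨C⟩ := hc
  calc Fintype.card V = ∑ c : Fin k, #{v | C v = c} := by
        rw [← card_univ]; exact card_eq_sum_card_fiberwise fun v _ => mem_univ (C v)
    _ ≤ ∑ _c : Fin k, G.indepNum := sum_le_sum fun c _ =>
        IsIndepSet.card_le_indepNum <| by
          simpa [Coloring.colorClass] using C.isIndepSet_colorClass c
    _ = k * G.indepNum := by simp

theorem indepNum_add_two_mul_boxicity_le [Fintype V] (G : SimpleGraph V) :
    G.indepNum + 2 * boxicity G ≤ Fintype.card V + 2 := by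
  obtain ⟨A, hA, hcard⟩ := G.exists_isNIndepSet_indepNum
  have hbox := boxicity_le_of_isIndepSet hA
  have hA_le : A.card ≤ Fintype.card V := A.card_le_univ
  omega

end SimpleGraph

theorem chromaticNumber_ge_of_boxicity_general {V : Type*} [Fintype V]
    (G : SimpleGraph V) (n : ℕ) (hn : n = Fintype.card V) :
    (n : ℕ∞) ≤ ((n - 2 * boxicity G + 2 : ℕ) : ℕ∞) * G.chromaticNumber := by
  have hχ : G.chromaticNumber ≠ ⊤ :=
    SimpleGraph.chromaticNumber_ne_top_iff_exists.mpr ⟨_, G.colorable_of_fintype⟩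
  have hcard := G.card_le_mul_indepNum G.colorable_chromaticNumber_of_fintype
  have hbound := G.indepNum_add_two_mul_boxicity_le
  rw [← ENat.natCast_toNat hχ, ← Nat.cast_mul, Nat.cast_le, hn, mul_comm]
  calc Fintype.card V ≤ G.chromaticNumber.toNat * G.indepNum := hcard
    _ ≤ G.chromaticNumber.toNat * (Fintype.card V - 2 * boxicity G + 2) :=
      Nat.mul_le_mul_left _ (by omega)

/-- If `box(G) = n/2 - s` then `χ(G) ≥ n/(2s + 2)`; equivalently, for `2·box(G) ≤ n`,
`(n - 2·box(G) + 2) · χ(G) ≥ n`. -/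
theorem chromaticNumber_ge_of_boxicity {V : Type*} [Fintype V] [Nonempty V]
    (G : SimpleGraph V) (n : ℕ) (hn : n = Fintype.card V)
    (hbox : 2 * boxicity G ≤ n) :
    (n : ℕ∞) ≤ ((n - 2 * boxicity G + 2 : ℕ) : ℕ∞) * G.chromaticNumber :=
  chromaticNumber_ge_of_boxicity_general G n hn
end

section
/- For every m ≥ 1, the star graph K_{1,m} (one center vertex adjacent to m leaves, with no edges among the leaves) satisfies cub(K_{1,m}) = ⌈log₂ m⌉. -/
/-!
Every leaf lies within distance `1` of the centre in each coordinate, so two leaves lying on the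
same side of the centre in every coordinate are within distance `1` of each other and would be
adjacent. Hence the side patterns `Fin k → Bool` of the `m` leaves are distinct: `m ≤ 2 ^ k`.
Conversely, the centre at the origin and the leaves at distinct points of `{-1, 1}^k` form a
`k`-cube representation.
-/

lemma abs_sub_le_of_abs_sub_le_of_le_iff_le {R : Type*}
    [AddCommGroup R] [LinearOrder R] [IsOrderedAddMonoid R] {x y z r : R}
    (hy : |x - y| ≤ r) (hz : |x - z| ≤ r) (hyz : x ≤ y ↔ x ≤ z) : |y - z| ≤ r := by
  by_cases hxy : x ≤ y
  · have hxz := hyz.mp hxy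
    rw [← sub_sub_sub_cancel_right y z x]
    exact abs_sub_le_of_nonneg_of_le
      (sub_nonneg.2 hxy) ((abs_sub_comm x y ▸ hy).trans' (le_abs_self _))
      (sub_nonneg.2 hxz) ((abs_sub_comm x z ▸ hz).trans' (le_abs_self _))
  · have hxz : ¬x ≤ z := mt hyz.mpr hxy
    rw [← sub_sub_sub_cancel_left z y x]
    exact abs_sub_le_of_nonneg_of_le
      (sub_nonneg.2 (le_of_not_ge hxz)) (hz.trans' (le_abs_self _))
      (sub_nonneg.2 (le_of_not_ge hxy)) (hy.trans' (le_abs_self _))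

lemma abs_ite_sub_ite_le_one_iff (b b' : Bool) :
    |(if b then 1 else -1 : ℝ) - (if b' then 1 else -1)| ≤ 1 ↔ b = b' := by
  cases b <;> cases b' <;> norm_num

lemma abs_ite_le_one (b : Bool) : |(if b then 1 else -1 : ℝ)| ≤ 1 := by
  cases b <;> norm_num

section CompleteBipartite

variable {α β : Type*} {k : ℕ}

lemma hasCubeRep_completeBipartiteGraph_of_embedding [Subsingleton α]
    (f : β ↪ (Fin k → Bool)) : HasCubeRep (completeBipartiteGraph α β) k := by
  refine ⟨Sum.elim 0 fun b i => if f b i then 1 else -1, ?_⟩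
  rintro (a | b) (a' | b') hne
  · exact absurd (congrArg Sum.inl (Subsingleton.elim a a')) hne
  · simpa using fun i => abs_ite_le_one (f b' i)
  · simpa using fun i => abs_ite_le_one (f b i)
  · simpa [abs_ite_sub_ite_le_one_iff, ← funext_iff] using hne

lemma nonempty_embedding_of_hasCubeRep_completeBipartiteGraph [Nonempty α]
    (h : HasCubeRep (completeBipartiteGraph α β) k) : Nonempty (β ↪ (Fin k → Bool)) := by
  obtain ⟨c, hc⟩ := h
  obtain ⟨a⟩ := ‹Nonempty α›
  have hcentre (b : β) (i : Fin k) : |c (.inl a) i - c (.inr b) i| ≤ 1 :=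
    (hc (.inl a) (.inr b) Sum.inl_ne_inr).mp (by simp) i
  refine ⟨⟨fun b i => decide (c (.inl a) i ≤ c (.inr b) i), fun b b' hbb' => ?_⟩⟩
  by_contra hne
  have hfar : ¬ (completeBipartiteGraph α β).Adj (.inr b) (.inr b') := by simp
  refine hfar ((hc _ _ fun h => hne (Sum.inr_injective h)).mpr fun i => ?_)
  exact abs_sub_le_of_abs_sub_le_of_le_iff_le (hcentre b i) (hcentre b' i)
    (decide_eq_decide.mp (congrFun hbb' i))

lemma hasCubeRep_completeBipartiteGraph_iff [Unique α] [Fintype β] :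
    HasCubeRep (completeBipartiteGraph α β) k ↔ Fintype.card β ≤ 2 ^ k := by
  refine ⟨fun h => ?_, fun h => ?_⟩
  · obtain ⟨f⟩ := nonempty_embedding_of_hasCubeRep_completeBipartiteGraph h
    simpa using Fintype.card_le_of_embedding f
  · have hcard : Fintype.card β ≤ Fintype.card (Fin k → Bool) := by simpa
    obtain ⟨f⟩ := Function.Embedding.nonempty_of_card_le hcard
    exact hasCubeRep_completeBipartiteGraph_of_embedding f

end CompleteBipartite

lemma cubicity_eq_of_forall_hasCubeRep_iff {V : Type*} {G : SimpleGraph V} {n : ℕ}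
    (h : ∀ k, HasCubeRep G k ↔ n ≤ k) : cubicity G = n := by
  rw [cubicity, show {k | HasCubeRep G k} = Set.Ici n from Set.ext h, csInf_Ici]

theorem cubicity_star_general (m : ℕ) :
    cubicity (completeBipartiteGraph (Fin 1) (Fin m)) = Nat.clog 2 m :=
  cubicity_eq_of_forall_hasCubeRep_iff fun k => by
    rw [hasCubeRep_completeBipartiteGraph_iff, Fintype.card_fin,
      Nat.clog_le_iff_le_pow one_lt_two]

/-- The star `K_{1,m}` has cubicity `⌈log₂ m⌉`. -/
theorem cubicity_star (m : ℕ) (hm : 1 ≤ m) :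
    cubicity (completeBipartiteGraph (Fin 1) (Fin m)) = Nat.clog 2 m :=
  cubicity_star_general m
end

section
/- For every m ≥ 1, the crown graph H_m satisfies box(H_m) ≥ ⌈m/2⌉. -/
/-- The crown graph `H_m` (`K_{m,m}` minus a perfect matching): `(s, i)` and `(t, j)`
are adjacent iff `s ≠ t` and `i ≠ j`. -/
def crownGraph (m : ℕ) : SimpleGraph (Fin 2 × Fin m) :=
  SimpleGraph.fromRel (fun p q => p.1 ≠ q.1 ∧ p.2 ≠ q.2)

open Set

theorem Set.Icc_inter_Icc_nonempty_iff_s10 {α : Type*} [Lattice α] {a₁ b₁ a₂ b₂ : α}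
    (h₁ : a₁ ≤ b₁) (h₂ : a₂ ≤ b₂) :
    (Icc a₁ b₁ ∩ Icc a₂ b₂).Nonempty ↔ a₁ ≤ b₂ ∧ a₂ ≤ b₁ := by
  simp only [Icc_inter_Icc, nonempty_Icc, sup_le_iff, le_inf_iff]
  tauto

section BoxRep

variable {V : Type*} {G : SimpleGraph V}

theorem hasBoxRep_of_finite_index {ι : Type*} [Finite ι] (a b : V → ι → ℝ)
    (hab : ∀ v i, a v i ≤ b v i)
    (hrep : ∀ u v, u ≠ v →
      (G.Adj u v ↔ ∀ i, (Icc (a u i) (b u i) ∩ Icc (a v i) (b v i)).Nonempty)) :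
    HasBoxRep G (Nat.card ι) := by
  let e := (Finite.equivFin ι).symm
  refine ⟨fun v i => a v (e i), fun v i => b v (e i), fun v i => hab v (e i), fun u v huv => ?_⟩
  exact (hrep u v huv).trans e.forall_congr_right.symm

variable (G) in
/-- One coordinate per non-edge `{x, y}`: there `x` gets `{0}`, `y` gets `{1}` and every other
vertex `[0, 1]`. -/
theorem exists_hasBoxRep [Finite V] : ∃ k, HasBoxRep G k := by
  classical
  let ι := {p : V × V // p.1 ≠ p.2 ∧ ¬ G.Adj p.1 p.2}
  let a : V → ι → ℝ := fun v p => if v = p.1.2 then 1 else 0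
  let b : V → ι → ℝ := fun v p => if v = p.1.1 then 0 else 1
  have hab : ∀ v p, a v p ≤ b v p := fun v p => by
    have := p.2.1
    simp only [a, b]
    split_ifs <;> simp_all
  refine ⟨_, hasBoxRep_of_finite_index a b hab fun u v huv => ?_⟩
  simp only [Icc_inter_Icc_nonempty_iff_s10 (hab _ _) (hab _ _)]
  constructor
  · rintro hadj ⟨⟨x, y⟩, hxy, hnadj⟩
    simp only [a, b]
    split_ifs <;> simp_all [G.adj_comm]
  · intro h
    by_contra hnadj
    have hsep := (h ⟨(u, v), huv, hnadj⟩).2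
    norm_num [a, b] at hsep

theorem le_boxicity [Finite V] {n : ℕ} (h : ∀ k, HasBoxRep G k → n ≤ k) : n ≤ boxicity G :=
  le_csInf (exists_hasBoxRep G) h

theorem HasBoxRep.card_le_two_mul {ι : Type*} [Fintype ι] {k : ℕ} (h : HasBoxRep G k)
    (x y : ι → V) (hne : ∀ i, x i ≠ y i) (hnadj : ∀ i, ¬ G.Adj (x i) (y i))
    (hadj : ∀ i j, i ≠ j → G.Adj (x i) (y j)) :
    Fintype.card ι ≤ 2 * k := by
  obtain ⟨a, b, hab, hrep⟩ := h
  have cross : ∀ i j, i ≠ j → ∀ c, a (x i) c ≤ b (y j) c ∧ a (y j) c ≤ b (x i) c :=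
    fun i j hij c => (Icc_inter_Icc_nonempty_iff_s10 (hab _ _) (hab _ _)).1
      ((hrep _ _ (hadj i j hij).ne).1 (hadj i j hij) c)
  let Separates (i : ι) : Fin k × Bool → Prop
    | (c, true) => b (x i) c < a (y i) c
    | (c, false) => b (y i) c < a (x i) c
  have separated : ∀ i, ∃ p, Separates i p := fun i => by
    obtain ⟨c, hc⟩ := not_forall.1 (mt (hrep _ _ (hne i)).2 (hnadj i))
    rw [Icc_inter_Icc_nonempty_iff_s10 (hab _ _) (hab _ _), not_and_or, not_le, not_le] at hc
    rcases hc with hc | hc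
    exacts [⟨(c, false), hc⟩, ⟨(c, true), hc⟩]
  choose f hf using separated
  have hinj : f.Injective := by
    intro i j hij
    by_contra hij'
    have hi := hf i
    have hj := hf j
    rw [← hij] at hj
    generalize f i = p at hi hj
    obtain ⟨c, _ | _⟩ := p <;> simp only [Separates] at hi hj <;>
      linarith [cross i j hij' c, cross j i (Ne.symm hij') c]
  simpa [mul_comm] using Fintype.card_le_of_injective f hinj

end BoxRep

theorem crownGraph_adj {m : ℕ} {p q : Fin 2 × Fin m} :
    (crownGraph m).Adj p q ↔ p.1 ≠ q.1 ∧ p.2 ≠ q.2 := by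
  simp only [crownGraph, SimpleGraph.fromRel_adj, ne_eq, Prod.ext_iff]
  tauto

theorem boxicity_crownGraph_ge_general (m : ℕ) :
    (m + 1) / 2 ≤ boxicity (crownGraph m) := by
  refine le_boxicity fun k hk => ?_
  have := hk.card_le_two_mul (fun i => (0, i)) (fun i => (1, i)) (by simp)
    (by simp [crownGraph_adj]) (fun i j hij => by simp [crownGraph_adj, hij])
  rw [Fintype.card_fin] at this
  omega

/-- The crown graph `H_m` has boxicity at least `⌈m/2⌉`. -/
theorem boxicity_crownGraph_ge (m : ℕ) (hm : 1 ≤ m) :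
    (m + 1) / 2 ≤ boxicity (crownGraph m) :=
  boxicity_crownGraph_ge_general m
end

section
/- Let G be a finite simple graph whose vertex set is partitioned into a set K inducing a clique, with K nonempty, and a set S inducing an independent set (i.e., G is a split graph). Then box(G) ≤ min{⌈|K|/2⌉, ⌈|S|/2⌉}. -/
open Set

theorem Finset.exists_pairs_cover_s12 {α : Type*} (X : Finset α) :
    ∃ σ τ : Fin ((X.card + 1) / 2) → α, ∀ v ∈ X, ∃ i, σ i = v ∨ τ i = v := by
  set c := X.card
  let f : Fin c → α := fun j => X.equivFin.symm j
  refine ⟨fun i => f ⟨2 * i, by omega⟩, fun i => f ⟨min (2 * i + 1) (c - 1), by omega⟩,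
    fun v hv => ?_⟩
  obtain ⟨j, rfl⟩ : ∃ j, f j = v := ⟨X.equivFin ⟨v, hv⟩, by simp [f]⟩
  refine ⟨⟨j / 2, by omega⟩, ?_⟩
  have hj := j.isLt
  rcases Nat.even_or_odd' (j : ℕ) with ⟨m, hm | hm⟩
  · exact .inl (congrArg f (Fin.ext (by simp only; omega)))
  · exact .inr (congrArg f (Fin.ext (by simp only; omega)))

theorem natCast_add_mem_Icc_iff {n m m' : ℕ} {x : ℝ} (hx : x ∈ Ioo 0 1) :
    (n : ℝ) + x ∈ Icc (m : ℝ) (m' + 1) ↔ n ∈ Icc m m' := by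
  obtain ⟨hx0, hx1⟩ := hx
  simp only [mem_Icc]
  constructor
  · rintro ⟨h1, h2⟩
    constructor
    · by_contra! h
      have : (n : ℝ) + 1 ≤ m := by exact_mod_cast h
      linarith
    · by_contra! h
      have : (m' : ℝ) + 1 ≤ n := by exact_mod_cast h
      linarith
  · rintro ⟨h1, h2⟩
    have h1' : (m : ℝ) ≤ n := by exact_mod_cast h1
    have h2' : (n : ℝ) ≤ m' := by exact_mod_cast h2
    constructor <;> linarith

theorem eq_of_natCast_add_eq_natCast_add {n m : ℕ} {x y : ℝ} (hx : x ∈ Ioo 0 1)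
    (hy : y ∈ Ioo 0 1) (h : n + x = m + y) : x = y := by
  rw [← Int.fract_eq_self.2 (Ioo_subset_Ico_self hx),
    ← Int.fract_eq_self.2 (Ioo_subset_Ico_self hy), ← Int.fract_natCast_add n, h,
    Int.fract_natCast_add]

def splitCell (p q : Prop) [Decidable p] [Decidable q] : ℕ :=
  if p then (if q then 1 else 0) else (if q then 2 else 3)

section splitCell

variable (p q : Prop) [Decidable p] [Decidable q]

theorem splitCell_mem_Icc_zero_one_iff : splitCell p q ∈ Icc 0 1 ↔ p := by
  unfold splitCell; split_ifs <;> simp_all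

theorem splitCell_mem_Icc_one_two_iff : splitCell p q ∈ Icc 1 2 ↔ q := by
  unfold splitCell; split_ifs <;> simp_all

theorem splitCell_mem_Icc_zero_three : splitCell p q ∈ Icc 0 3 := by
  unfold splitCell; split_ifs <;> simp

end splitCell

theorem ite_mem_Icc_ite_iff {P Q A B : Prop} [Decidable P] [Decidable Q] [Decidable A]
    [Decidable B] :
    (if P then -1 else if Q then 1 else 0 : ℝ) ∈ Icc (if A then -1 else 0) (if B then 1 else 0) ↔
      (P → A) ∧ (¬P → Q → B) := by
  split_ifs <;> norm_num <;> tauto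

theorem ite_ite_eq_neg_one_iff {P Q : Prop} [Decidable P] [Decidable Q] :
    (if P then -1 else if Q then 1 else 0 : ℝ) = -1 ↔ P := by
  split_ifs <;> norm_num [*]

theorem ite_ite_eq_one_iff {P Q : Prop} [Decidable P] [Decidable Q] :
    (if P then -1 else if Q then 1 else 0 : ℝ) = 1 ↔ ¬P ∧ Q := by
  split_ifs <;> norm_num [*]

section SplitGraph

variable {V : Type*} {G : SimpleGraph V} {K S : Set V} {k : ℕ}

theorem hasBoxRep_of_split (hcover : K ∪ S = univ) (hK : G.IsClique K) (hS : G.IsIndepSet S)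
    (a b p : V → Fin k → ℝ) (c : Fin k → ℝ) (hc : ∀ u ∈ K, ∀ i, c i ∈ Icc (a u i) (b u i))
    (hKS : ∀ u ∈ K, ∀ v ∈ S, G.Adj u v ↔ ∀ i, p v i ∈ Icc (a u i) (b u i))
    (hSS : InjOn p S) : HasBoxRep G k := by
  classical
  have hmemK : ∀ v, v ∉ S → v ∈ K := fun v hv => by
    simpa [hv] using hcover.ge (mem_univ v)
  let A v := if v ∈ S then p v else a v
  let B v := if v ∈ S then p v else b v
  have hKS' : ∀ u v, u ∉ S → v ∈ S →
      (G.Adj u v ↔ ∀ i, (Icc (A u i) (B u i) ∩ Icc (A v i) (B v i)).Nonempty) := by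
    intro u v hu hv
    simp only [A, B, hu, hv, if_false, if_true, Icc_self, inter_singleton_nonempty]
    exact hKS u (hmemK u hu) v hv
  refine ⟨A, B, fun v i => ?_, fun u v huv => ?_⟩
  · by_cases hv : v ∈ S
    · simp [A, B, hv]
    · simpa [A, B, hv] using (hc v (hmemK v hv) i).1.trans (hc v (hmemK v hv) i).2
  by_cases hu : u ∈ S <;> by_cases hv : v ∈ S
  · simp only [A, B, hu, hv, if_true, Icc_self, singleton_inter_nonempty, mem_singleton_iff,
      hS hu hv huv, false_iff, not_forall]
    exact Function.ne_iff.mp fun h => huv (hSS hu hv h)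
  · rw [G.adj_comm, hKS' v u hv hu]
    exact forall_congr' fun i => by rw [inter_comm]
  · exact hKS' u v hu hv
  · simp only [hK (hmemK u hu) (hmemK v hv) huv, true_iff]
    intro i
    simp only [A, B, hu, hv, if_false]
    exact ⟨c i, hc u (hmemK u hu) i, hc v (hmemK v hv) i⟩

theorem hasBoxRep_of_indepSet_pairs (hcover : K ∪ S = univ) (hK : G.IsClique K)
    (hS : G.IsIndepSet S) (σ τ : Fin k → V) (hστ : ∀ v ∈ S, ∃ i, σ i = v ∨ τ i = v) :
    HasBoxRep G k := by
  classical
  refine hasBoxRep_of_split hcover hK hS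
    (fun u i => if G.Adj u (σ i) then -1 else 0) (fun u i => if G.Adj u (τ i) then 1 else 0)
    (fun v i => if v = σ i then -1 else if v = τ i then 1 else 0) (fun _ => 0)
    (fun u _ i => by constructor <;> split_ifs <;> norm_num) (fun u _ v hv => ?_)
    (fun u hu v _ huv => ?_)
  · simp only [ite_mem_Icc_ite_iff]
    constructor
    · intro hadj i
      exact ⟨fun h => h ▸ hadj, fun _ h => h ▸ hadj⟩
    · intro hall
      obtain ⟨i, hi⟩ := hστ v hv
      by_cases hσ : σ i = v
      · exact hσ ▸ (hall i).1 hσ.symm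
      · have hτ : τ i = v := hi.resolve_left hσ
        exact hτ ▸ (hall i).2 (Ne.symm hσ) hτ.symm
  · by_contra hne
    obtain ⟨i, hi⟩ := hστ u hu
    have h := congrFun huv i
    dsimp only at h
    by_cases hσ : u = σ i
    · rw [if_pos hσ] at h
      exact hne (hσ.trans (ite_ite_eq_neg_one_iff.mp h.symm).symm)
    · have hτ : u = τ i := (hi.resolve_left (Ne.symm hσ)).symm
      rw [if_neg hσ, if_pos hτ] at h
      exact hne (hτ.trans (ite_ite_eq_one_iff.mp h.symm).2.symm)

theorem hasBoxRep_of_clique_pairs [Countable V] (hcover : K ∪ S = univ) (hK : G.IsClique K)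
    (hS : G.IsIndepSet S) (hk : 0 < k) (α β : Fin k → V)
    (hαβ : ∀ u ∈ K, ∃ i, α i = u ∨ β i = u) : HasBoxRep G k := by
  classical
  obtain ⟨e⟩ := nonempty_embedding_nat V
  let x : V ↪ Ioo (0 : ℝ) 1 := e.trans (@Infinite.natEmbedding _ (Ioo.infinite one_pos))
  let lo u i : ℕ := if u = α i then 0 else if u = β i then 1 else 0
  let hi u i : ℕ := if u = α i then 1 else if u = β i then 2 else 3
  let cell v i := splitCell (G.Adj (α i) v) (G.Adj (β i) v)
  have hcell : ∀ u ∈ K, ∀ v, G.Adj u v ↔ ∀ i, cell v i ∈ Icc (lo u i) (hi u i) := by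
    intro u hu v
    constructor
    · intro hadj i
      by_cases hα : u = α i
      · simp only [lo, hi, cell, if_pos hα, splitCell_mem_Icc_zero_one_iff]
        exact hα ▸ hadj
      by_cases hβ : u = β i
      · simp only [lo, hi, cell, if_neg hα, if_pos hβ, splitCell_mem_Icc_one_two_iff]
        exact hβ ▸ hadj
      · simp only [lo, hi, if_neg hα, if_neg hβ]
        exact splitCell_mem_Icc_zero_three _ _
    · intro hall
      obtain ⟨i, hcov⟩ := hαβ u hu
      by_cases hα : u = α i
      · have := hall i
        simp only [lo, hi, cell, if_pos hα, splitCell_mem_Icc_zero_one_iff] at this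
        exact hα ▸ this
      · have hβ : u = β i := (hcov.resolve_left (Ne.symm hα)).symm
        have := hall i
        simp only [lo, hi, cell, if_neg hα, if_pos hβ, splitCell_mem_Icc_one_two_iff] at this
        exact hβ ▸ this
  refine hasBoxRep_of_split hcover hK hS (fun u i => lo u i) (fun u i => hi u i + 1)
    (fun v i => cell v i + x v) (fun _ => 2) (fun u _ i => ?_) (fun u hu v _ => ?_)
    (fun u _ v _ h => ?_)
  · simp only [lo, hi, mem_Icc]
    constructor <;> split_ifs <;> norm_num
  · rw [hcell u hu v]
    exact forall_congr' fun i => (natCast_add_mem_Icc_iff (x v).2).symm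
  · have h0 := congrFun h ⟨0, hk⟩
    exact x.injective (Subtype.ext (eq_of_natCast_add_eq_natCast_add (x u).2 (x v).2 h0))

end SplitGraph

theorem boxicity_splitGraph_general {V : Type*} [Fintype V] [DecidableEq V] (G : SimpleGraph V)
    (K S : Finset V) (hunion : K ∪ S = Finset.univ)
    (hK : G.IsClique ↑K) (hS : ∀ u ∈ S, ∀ v ∈ S, ¬ G.Adj u v)
    (hKne : K.Nonempty) :
    boxicity G ≤ min ((K.card + 1) / 2) ((S.card + 1) / 2) := by
  have hcover : (K ∪ S : Set V) = univ := by rw [← Finset.coe_union, hunion, Finset.coe_univ]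
  have hS' : G.IsIndepSet S := fun u hu v hv _ => hS u hu v hv
  have hk : 0 < (K.card + 1) / 2 := by have := hKne.card_pos; omega
  obtain ⟨α, β, hαβ⟩ := K.exists_pairs_cover_s12
  obtain ⟨σ, τ, hστ⟩ := S.exists_pairs_cover_s12
  exact le_min (Nat.sInf_le (hasBoxRep_of_clique_pairs hcover hK hS' hk α β hαβ))
    (Nat.sInf_le (hasBoxRep_of_indepSet_pairs hcover hK hS' σ τ hστ))

/-- For a split graph `G`, whose vertex set is partitioned into a nonempty clique `K`
and an independent set `S`, `box(G) ≤ min {⌈|K|/2⌉, ⌈|S|/2⌉}`. -/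
theorem boxicity_splitGraph {V : Type*} [Fintype V] [DecidableEq V] (G : SimpleGraph V)
    (K S : Finset V) (hdisj : Disjoint K S) (hunion : K ∪ S = Finset.univ)
    (hK : G.IsClique ↑K) (hS : ∀ u ∈ S, ∀ v ∈ S, ¬ G.Adj u v)
    (hKne : K.Nonempty) :
    boxicity G ≤ min ((K.card + 1) / 2) ((S.card + 1) / 2) :=
  boxicity_splitGraph_general G K S hunion hK hS hKne
end
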